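/- arXiv:1403.5302 — 5 statements merged into one kernel-verified Lean document; each statement's English description precedes it below -/
import Mathlib

section
/- Let t > 0, λ > 0, η₁ > 1, η₂ > 0, and p, q > 0 with p + q = 1. Then the functions x ↦ H₁(t,x) (on x > 1) and x ↦ H₂(t,1/x) (on x > 1) belong to the Zygmund class: for every α > 0, x ↦ x^α H₁(t,x) is ultimately increasing and x ↦ x^{−α} H₁(t,x) is ultimately decreasing, and the same holds for x ↦ H₂(t,1/x). -/
open Filter Asymptotics MeasureTheory

/-- `P_{n,k}` from Kou's double exponential jump model: `P_{n,n} = p^n` and, for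
`1 ≤ k ≤ n−1`,
`P_{n,k} = Σ_{i=k}^{n−1} C(n−k−1, i−k) C(n,i) (η₁/(η₁+η₂))^{i−k} (η₂/(η₁+η₂))^{n−i} p^i q^{n−i}`. -/
noncomputable def Pcoef (η₁ η₂ p q : ℝ) (n k : ℕ) : ℝ :=
  if k = n then p ^ n
  else ∑ i ∈ Finset.Ico k n,
    ((n - k - 1).choose (i - k) : ℝ) * (n.choose i : ℝ) *
      (η₁ / (η₁ + η₂)) ^ (i - k) * (η₂ / (η₁ + η₂)) ^ (n - i) * p ^ i * q ^ (n - i)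

/-- `Q_{n,k}` from Kou's double exponential jump model: `Q_{n,n} = q^n` and, for
`1 ≤ k ≤ n−1`,
`Q_{n,k} = Σ_{i=k}^{n−1} C(n−k−1, i−k) C(n,i) (η₁/(η₁+η₂))^{n−i} (η₂/(η₁+η₂))^{i−k} p^{n−i} q^i`. -/
noncomputable def Qcoef (η₁ η₂ p q : ℝ) (n k : ℕ) : ℝ :=
  if k = n then q ^ n
  else ∑ i ∈ Finset.Ico k n,
    ((n - k - 1).choose (i - k) : ℝ) * (n.choose i : ℝ) *
      (η₁ / (η₁ + η₂)) ^ (n - i) * (η₂ / (η₁ + η₂)) ^ (i - k) * p ^ (n - i) * q ^ i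

/-- The Poisson weights `π_n = e^{−λt} (λt)^n / n!`. -/
noncomputable def poisCoef (lam t : ℝ) (n : ℕ) : ℝ :=
  Real.exp (-(lam * t)) * (lam * t) ^ n / (n.factorial : ℝ)

/-- `a_k = (η₁^{k+1}/k!) Σ_{n=k+1}^∞ π_n P_{n,k+1}` (the series is reindexed by
`n = m + (k+1)`, `m ≥ 0`). -/
noncomputable def aCoef (lam t η₁ η₂ p q : ℝ) (k : ℕ) : ℝ :=
  η₁ ^ (k + 1) / (k.factorial : ℝ) *
    ∑' m : ℕ, poisCoef lam t (m + (k + 1)) * Pcoef η₁ η₂ p q (m + (k + 1)) (k + 1)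

/-- `b_k = (η₂^{k+1}/k!) Σ_{n=k+1}^∞ π_n Q_{n,k+1}` (the series is reindexed by
`n = m + (k+1)`, `m ≥ 0`). -/
noncomputable def bCoef (lam t η₁ η₂ p q : ℝ) (k : ℕ) : ℝ :=
  η₂ ^ (k + 1) / (k.factorial : ℝ) *
    ∑' m : ℕ, poisCoef lam t (m + (k + 1)) * Qcoef η₁ η₂ p q (m + (k + 1)) (k + 1)

/-- `G₁(t,u) = Σ_{k=0}^∞ a_k u^k`. -/
noncomputable def G1 (lam t η₁ η₂ p q : ℝ) (u : ℝ) : ℝ :=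
  ∑' k : ℕ, aCoef lam t η₁ η₂ p q k * u ^ k

/-- `G₂(t,−u) = Σ_{k=0}^∞ b_k u^k`; `G2m lam t η₁ η₂ p q u` stands for `G₂(t,−u)`. -/
noncomputable def G2m (lam t η₁ η₂ p q : ℝ) (u : ℝ) : ℝ :=
  ∑' k : ℕ, bCoef lam t η₁ η₂ p q k * u ^ k

/-- `H₁(t,x) = G₁(t, log x)` for `x > 1`. -/
noncomputable def H1fun (lam t η₁ η₂ p q : ℝ) (x : ℝ) : ℝ :=
  G1 lam t η₁ η₂ p q (Real.log x)

/-- `H₂(t,x) = G₂(t, log x) = G2m(t, log(1/x))` for `0 < x < 1`. -/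
noncomputable def H2fun (lam t η₁ η₂ p q : ℝ) (x : ℝ) : ℝ :=
  G2m lam t η₁ η₂ p q (Real.log x⁻¹)

/-- The density of the absolutely continuous part of the law of the exponential compound
Poisson factor: `H(t,x) = H₁(t,x) x^{−η₁−1}` for `x > 1` and `H(t,x) = H₂(t,x) x^{η₂−1}`
for `0 < x < 1`. -/
noncomputable def Hfun (lam t η₁ η₂ p q : ℝ) (x : ℝ) : ℝ :=
  if 1 < x then H1fun lam t η₁ η₂ p q x * x ^ (-η₁ - 1)
  else H2fun lam t η₁ η₂ p q x * x ^ (η₂ - 1)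

/-- The Mellin convolution of two measurable functions on `(0,∞)`:
`f ⋆_M g (x) = ∫_0^∞ f(x/t) g(t) dt/t`. -/
noncomputable def mellinConv (f g : ℝ → ℝ) (x : ℝ) : ℝ :=
  ∫ t in Set.Ioi (0:ℝ), f (x / t) * g t / t

lemma choose_le_two_pow' (a b : ℕ) : a.choose b ≤ 2 ^ a := by
  rcases le_or_gt b a with h | h
  · calc a.choose b ≤ ∑ i ∈ Finset.range (a+1), a.choose i :=
        Finset.single_le_sum (fun i _ => Nat.zero_le _) (Finset.mem_range.mpr (Nat.lt_succ_of_le h))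
    _ = 2 ^ a := Nat.sum_range_choose a
  · simp [Nat.choose_eq_zero_of_lt h]

lemma Pcoef_nonneg {η₁ η₂ p q : ℝ} (hη₁ : 0 ≤ η₁) (hη₂ : 0 ≤ η₂) (hp : 0 ≤ p) (hq : 0 ≤ q)
    (n k : ℕ) : 0 ≤ Pcoef η₁ η₂ p q n k := by
  unfold Pcoef
  split
  · positivity
  · refine Finset.sum_nonneg fun i _ => ?_
    have h1 : (0:ℝ) ≤ η₁ / (η₁ + η₂) := by positivity
    have h2 : (0:ℝ) ≤ η₂ / (η₁ + η₂) := by positivity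
    positivity

lemma pois_mul_P_le {lam t η₁ η₂ p q : ℝ} (hη₁ : 0 < η₁) (hη₂ : 0 < η₂)
    (hp : 0 < p) (hq : 0 < q) (hpq : p + q = 1) (hr : 0 < lam * t) (k m : ℕ) :
    poisCoef lam t (m + (k+1)) * Pcoef η₁ η₂ p q (m + (k+1)) (k+1)
      ≤ Real.exp (-(lam*t)) * (lam*t*p)^(k+1) / ((k+1).factorial : ℝ)
          * ((2*(lam*t))^m / (m.factorial : ℝ)) := by
  set r := lam * t with hrdef
  set x := η₁ / (η₁ + η₂) with hxdef
  set y := η₂ / (η₂ + η₁) with hy'def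
  have hydef : y = η₂ / (η₁ + η₂) := by rw [hy'def, add_comm]
  have hsum : 0 < η₁ + η₂ := by linarith
  have hx0 : 0 ≤ x := by positivity
  have hy0 : 0 ≤ y := by rw [hydef]; positivity
  have hx1 : x ≤ 1 := by rw [hxdef, div_le_one hsum]; linarith
  have hy1 : y ≤ 1 := by rw [hydef, div_le_one hsum]; linarith
  have hp1 : p ≤ 1 := by linarith
  have hq1 : q ≤ 1 := by linarith
  have he : (0:ℝ) < Real.exp (-r) := Real.exp_pos _
  rcases Nat.eq_zero_or_pos m with hm | hm
  · subst hm
    simp only [Nat.zero_add, Pcoef, if_pos rfl, poisCoef, pow_zero, Nat.factorial_zero]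
    rw [mul_pow]
    apply le_of_eq
    push_cast
    ring
  · -- m ≥ 1
    have hne : ¬ (k+1 = m + (k+1)) := by omega
    rw [Pcoef, if_neg hne]
    rw [Finset.sum_Ico_eq_sum_range]
    have hsub : m + (k+1) - (k+1) = m := by omega
    rw [hsub]
    set n := m + (k+1) with hndef
    set A := 2*r*(x*p) with hAdef
    set B := 2*r*(y*q) with hBdef
    have hA0 : 0 ≤ A := by positivity
    have hB0 : 0 ≤ B := by positivity
    set Cst : ℝ := Real.exp (-r) * (r*p)^(k+1) / ((k+1).factorial : ℝ) / (m.factorial : ℝ)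
      with hCdef
    have hC0 : 0 ≤ Cst := by rw [hCdef]; positivity
    have hterm : ∀ j ∈ Finset.range m,
        poisCoef lam t n * (((m - 1).choose ((k+1) + j - (k+1)) : ℝ)
          * (n.choose ((k+1)+j) : ℝ) * x ^ ((k+1)+j - (k+1)) * y ^ (n - ((k+1)+j))
          * p ^ ((k+1)+j) * q ^ (n - ((k+1)+j)))
        ≤ Cst * ((m.choose j : ℝ) * A ^ j * B ^ (m - j)) := by
      intro j hj
      have hjm : j < m := Finset.mem_range.mp hj
      have e1 : (k+1) + j - (k+1) = j := by omega
      have e3 : n - ((k+1)+j) = m - j := by omega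
      have hile : (k+1)+j ≤ n := by omega
      have hjle : j ≤ m := hjm.le
      rw [e1, e3]
      rw [Nat.cast_choose ℝ hile, Nat.cast_choose ℝ hjle]
      have key : ((m-1).choose j : ℝ) / ((((k+1)+j).factorial : ℝ) * ((m-j).factorial : ℝ))
          ≤ 2^m / (((k+1).factorial : ℝ) * ((j.factorial : ℝ) * ((m-j).factorial : ℝ))) := by
        apply div_le_div₀ (by positivity)
        · have h1 : ((m-1).choose j : ℝ) ≤ (2:ℝ)^(m-1) := by
            exact_mod_cast choose_le_two_pow' (m-1) j
          have h2 : (2:ℝ)^(m-1) ≤ (2:ℝ)^m := by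
            apply pow_le_pow_right₀ (by norm_num) (by omega)
          linarith
        · positivity
        · have hdvd : (k+1).factorial * j.factorial ∣ ((k+1)+j).factorial :=
            Nat.factorial_mul_factorial_dvd_factorial_add _ _
          have hle : (k+1).factorial * j.factorial ≤ ((k+1)+j).factorial :=
            Nat.le_of_dvd (Nat.factorial_pos _) hdvd
          calc ((k+1).factorial : ℝ) * ((j.factorial : ℝ) * ((m-j).factorial : ℝ))
              = (((k+1).factorial * j.factorial : ℕ) : ℝ) * ((m-j).factorial : ℝ) := by
                push_cast; ring
          _ ≤ ((((k+1)+j).factorial : ℕ) : ℝ) * ((m-j).factorial : ℝ) := by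
              apply mul_le_mul_of_nonneg_right _ (by positivity)
              exact_mod_cast hle
      have hpow : r^n = r^(k+1) * r^j * r^(m-j) := by
        rw [← pow_add, ← pow_add]
        congr 1
        omega
      have h2m : (2:ℝ)^m = 2^j * 2^(m-j) := by
        rw [← pow_add]; congr 1; omega
      have h3 : p ^ ((k+1)+j) = p^(k+1) * p^j := by rw [← pow_add]
      have lhs_eq : poisCoef lam t n * (((m-1).choose j : ℝ)
            * ((n.factorial : ℝ) / ((((k+1)+j).factorial : ℝ) * ((n - ((k+1)+j)).factorial : ℝ)))
            * x ^ j * y ^ (m-j) * p ^ ((k+1)+j) * q ^ (m-j))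
          = (Real.exp (-r) * r^(k+1) * p^(k+1) * (r*x*p)^j * (r*y*q)^(m-j))
            * (((m-1).choose j : ℝ) / ((((k+1)+j).factorial : ℝ) * ((m-j).factorial : ℝ))) := by
        rw [e3, poisCoef, hpow, h3]
        have hf1 : ((((k+1)+j).factorial : ℕ) : ℝ) ≠ 0 := by positivity
        have hf2 : (((m-j).factorial : ℕ) : ℝ) ≠ 0 := by positivity
        have hf3 : ((n.factorial : ℕ) : ℝ) ≠ 0 := by positivity
        rw [mul_pow, mul_pow, mul_pow, mul_pow]
        field_simp
        ring
      have rhs_eq : Cst * (((m.factorial : ℝ) / ((j.factorial : ℝ) * ((m-j).factorial : ℝ)))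
            * A ^ j * B ^ (m-j))
          = (Real.exp (-r) * r^(k+1) * p^(k+1) * (r*x*p)^j * (r*y*q)^(m-j))
            * ((2:ℝ)^m / (((k+1).factorial : ℝ) * ((j.factorial : ℝ) * ((m-j).factorial : ℝ)))) := by
        rw [hCdef, hAdef, hBdef, h2m]
        have hf1 : (((k+1).factorial : ℕ) : ℝ) ≠ 0 := by positivity
        have hf2 : ((j.factorial : ℕ) : ℝ) ≠ 0 := by positivity
        have hf3 : (((m-j).factorial : ℕ) : ℝ) ≠ 0 := by positivity
        have hf4 : ((m.factorial : ℕ) : ℝ) ≠ 0 := by positivity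
        rw [mul_pow, mul_pow, mul_pow, mul_pow, mul_pow, mul_pow]
        field_simp
        ring
      rw [lhs_eq, rhs_eq]
      exact mul_le_mul_of_nonneg_left key (by positivity)
    have hAB : A + B ≤ 2*r := by
      have hxp : x*p ≤ p := by nlinarith
      have hyq : y*q ≤ q := by nlinarith
      calc A + B = 2*r*(x*p + y*q) := by rw [hAdef, hBdef]; ring
      _ ≤ 2*r*1 := by
          apply mul_le_mul_of_nonneg_left _ (by positivity)
          linarith
      _ = 2*r := by ring
    rw [Finset.mul_sum, ← hxdef, ← hydef]
    calc ∑ j ∈ Finset.range m, poisCoef lam t n * (((m - 1).choose ((k+1) + j - (k+1)) : ℝ)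
          * (n.choose ((k+1)+j) : ℝ) * x ^ ((k+1)+j - (k+1)) * y ^ (n - ((k+1)+j))
          * p ^ ((k+1)+j) * q ^ (n - ((k+1)+j)))
        ≤ ∑ j ∈ Finset.range m, Cst * ((m.choose j : ℝ) * A ^ j * B ^ (m - j)) :=
          Finset.sum_le_sum hterm
      _ ≤ ∑ j ∈ Finset.range (m+1), Cst * ((m.choose j : ℝ) * A ^ j * B ^ (m - j)) := by
          apply Finset.sum_le_sum_of_subset_of_nonneg
          · exact Finset.range_subset_range.mpr (by omega)
          · intro j _ _
            positivity
      _ = Cst * (A + B)^m := by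
          rw [add_pow, Finset.mul_sum]
          refine Finset.sum_congr rfl fun j _ => by ring
      _ ≤ Cst * (2*r)^m := by
          apply mul_le_mul_of_nonneg_left _ hC0
          exact pow_le_pow_left₀ (by positivity) hAB m
      _ = Real.exp (-r) * (r*p)^(k+1) / ((k+1).factorial : ℝ) * ((2*r)^m / (m.factorial : ℝ)) := by
          rw [hCdef]; ring

lemma pois_mul_P_zero {lam t η₁ η₂ p q : ℝ} (k : ℕ) :
    poisCoef lam t (0 + (k+1)) * Pcoef η₁ η₂ p q (0 + (k+1)) (k+1)
      = Real.exp (-(lam*t)) * (lam*t*p)^(k+1) / ((k+1).factorial : ℝ) := by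
  have h : Pcoef η₁ η₂ p q (0 + (k+1)) (k+1) = p ^ (0 + (k+1)) := by
    rw [Pcoef, if_pos (by omega)]
  rw [h, poisCoef]
  simp only [Nat.zero_add]
  rw [mul_pow]
  ring

lemma poisP_nonneg {lam t η₁ η₂ p q : ℝ} (hη₁ : 0 ≤ η₁) (hη₂ : 0 ≤ η₂)
    (hp : 0 ≤ p) (hq : 0 ≤ q) (hr : 0 ≤ lam * t) (k m : ℕ) :
    0 ≤ poisCoef lam t (m + (k+1)) * Pcoef η₁ η₂ p q (m + (k+1)) (k+1) := by
  apply mul_nonneg _ (Pcoef_nonneg hη₁ hη₂ hp hq _ _)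
  unfold poisCoef
  positivity

lemma summable_poisP {lam t η₁ η₂ p q : ℝ} (hη₁ : 0 < η₁) (hη₂ : 0 < η₂)
    (hp : 0 < p) (hq : 0 < q) (hpq : p + q = 1) (hr : 0 < lam * t) (k : ℕ) :
    Summable (fun m => poisCoef lam t (m + (k+1)) * Pcoef η₁ η₂ p q (m + (k+1)) (k+1)) := by
  apply Summable.of_nonneg_of_le
    (poisP_nonneg hη₁.le hη₂.le hp.le hq.le hr.le k)
    (pois_mul_P_le hη₁ hη₂ hp hq hpq hr k)
  exact (Real.summable_pow_div_factorial (2*(lam*t))).mul_left _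

lemma tsum_exp_aux (x : ℝ) : ∑' m : ℕ, x^m / (m.factorial : ℝ) = Real.exp x := by
  rw [Real.exp_eq_exp_ℝ, NormedSpace.exp_eq_tsum_div]

lemma aCoef_bounds {lam t η₁ η₂ p q : ℝ} (hη₁ : 0 < η₁) (hη₂ : 0 < η₂)
    (hp : 0 < p) (hq : 0 < q) (hpq : p + q = 1) (hr : 0 < lam * t) (k : ℕ) :
    Real.exp (-(lam*t)) * (η₁*(lam*t)*p)^(k+1) / ((k.factorial : ℝ) * ((k+1).factorial : ℝ))
      ≤ aCoef lam t η₁ η₂ p q k ∧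
    aCoef lam t η₁ η₂ p q k
      ≤ Real.exp (lam*t) * (η₁*(lam*t)*p)^(k+1) / ((k.factorial : ℝ) * ((k+1).factorial : ℝ)) := by
  have hsumm := summable_poisP hη₁ hη₂ hp hq hpq hr k
  have hS_low : Real.exp (-(lam*t)) * (lam*t*p)^(k+1) / ((k+1).factorial : ℝ)
      ≤ ∑' m : ℕ, poisCoef lam t (m + (k+1)) * Pcoef η₁ η₂ p q (m + (k+1)) (k+1) := by
    rw [← pois_mul_P_zero k]
    exact Summable.le_tsum hsumm 0 fun j _ => poisP_nonneg hη₁.le hη₂.le hp.le hq.le hr.le k j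
  have hS_up : (∑' m : ℕ, poisCoef lam t (m + (k+1)) * Pcoef η₁ η₂ p q (m + (k+1)) (k+1))
      ≤ Real.exp (-(lam*t)) * (lam*t*p)^(k+1) / ((k+1).factorial : ℝ) * Real.exp (2*(lam*t)) := by
    have h1 := Summable.tsum_le_tsum (pois_mul_P_le hη₁ hη₂ hp hq hpq hr k) hsumm
      ((Real.summable_pow_div_factorial (2*(lam*t))).mul_left _)
    rw [tsum_mul_left, tsum_exp_aux] at h1
    exact h1
  have hk0 : (0:ℝ) < (k.factorial : ℝ) := by exact_mod_cast Nat.factorial_pos k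
  have hk1 : (0:ℝ) < ((k+1).factorial : ℝ) := by exact_mod_cast Nat.factorial_pos (k+1)
  have hmp : η₁*(lam*t)*p = η₁*(lam*t*p) := by ring
  constructor
  · have e1 : Real.exp (-(lam*t)) * (η₁*(lam*t)*p)^(k+1) / ((k.factorial : ℝ) * ((k+1).factorial : ℝ))
        = η₁^(k+1)/(k.factorial : ℝ)
          * (Real.exp (-(lam*t)) * (lam*t*p)^(k+1) / ((k+1).factorial : ℝ)) := by
      rw [hmp, mul_pow]
      field_simp
    rw [aCoef, e1]
    exact mul_le_mul_of_nonneg_left hS_low (by positivity)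
  · have hee : Real.exp (-(lam*t)) * Real.exp (2*(lam*t)) = Real.exp (lam*t) := by
      rw [← Real.exp_add]; ring_nf
    have e2 : η₁^(k+1)/(k.factorial : ℝ)
          * (Real.exp (-(lam*t)) * (lam*t*p)^(k+1) / ((k+1).factorial : ℝ) * Real.exp (2*(lam*t)))
        = Real.exp (lam*t) * (η₁*(lam*t)*p)^(k+1) / ((k.factorial : ℝ) * ((k+1).factorial : ℝ)) := by
      rw [hmp, mul_pow, ← hee]
      field_simp
      ring
    rw [aCoef, ← e2]
    exact mul_le_mul_of_nonneg_left hS_up (by positivity)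

lemma Qcoef_eq_Pcoef (η₁ η₂ p q : ℝ) (n k : ℕ) :
    Qcoef η₁ η₂ p q n k = Pcoef η₂ η₁ q p n k := by
  unfold Pcoef Qcoef
  split
  · rfl
  · apply Finset.sum_congr rfl
    intro i _
    rw [add_comm η₂ η₁]
    ring

lemma bCoef_eq_aCoef (lam t η₁ η₂ p q : ℝ) :
    bCoef lam t η₁ η₂ p q = aCoef lam t η₂ η₁ q p := by
  funext k
  unfold bCoef aCoef
  congr 1
  apply tsum_congr
  intro m
  rw [Qcoef_eq_Pcoef]


noncomputable def Fser (c : ℕ → ℝ) (u : ℝ) : ℝ := ∑' k : ℕ, c k * u ^ k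

/-- derivative coefficient sequence -/
noncomputable def cderiv (c : ℕ → ℝ) (k : ℕ) : ℝ := ((k:ℝ) + 1) * c (k + 1)

lemma summable_ser {c : ℕ → ℝ} {d C : ℝ} (hd : 0 < d)
    (hup : ∀ k, |c k| ≤ C * d^(k+1) / ((k.factorial : ℝ) * (((k+1).factorial : ℝ))))
    (u : ℝ) : Summable (fun k => c k * u ^ k) := by
  have hC : 0 ≤ C := by
    have h0 := (abs_nonneg (c 0)).trans (hup 0)
    norm_num [Nat.factorial] at h0
    by_contra hC
    push_neg at hC
    nlinarith [mul_neg_of_neg_of_pos hC hd]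
  apply Summable.of_norm_bounded (g := fun k => (C * d) * ((d * |u|)^k / (k.factorial : ℝ)))
  · exact (Real.summable_pow_div_factorial (d * |u|)).mul_left _
  · intro k
    have h1 : ‖c k * u ^ k‖ = |c k| * |u| ^ k := by
      rw [norm_mul, norm_pow]; rfl
    rw [h1]
    have h2 : |c k| * |u| ^ k ≤ (C * d^(k+1) / ((k.factorial : ℝ) * ((k+1).factorial : ℝ))) * |u|^k :=
      mul_le_mul_of_nonneg_right (hup k) (by positivity)
    refine h2.trans ?_
    have h3 : (1:ℝ) ≤ ((k+1).factorial : ℝ) := by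
      exact_mod_cast Nat.one_le_iff_ne_zero.mpr (Nat.factorial_pos _).ne'
    have h4 : C * d^(k+1) / ((k.factorial : ℝ) * ((k+1).factorial : ℝ)) * |u|^k
        ≤ C * d^(k+1) / (k.factorial : ℝ) * |u|^k := by
      apply mul_le_mul_of_nonneg_right _ (by positivity)
      apply div_le_div_of_nonneg_left (by positivity) (by positivity)
      have hk0 : (0:ℝ) < (k.factorial : ℝ) := by exact_mod_cast Nat.factorial_pos k
      nlinarith
    refine h4.trans (le_of_eq ?_)
    rw [mul_pow, pow_succ]
    ring
lemma cderiv_up {c : ℕ → ℝ} {d C : ℝ} (hd : 0 < d) (hc : ∀ k, 0 ≤ c k)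
    (hup : ∀ k, c k ≤ C * d^(k+1) / ((k.factorial : ℝ) * (((k+1).factorial : ℝ)))) :
    ∀ k, |cderiv c k| ≤ (C * d) * d^(k+1) / ((k.factorial : ℝ) * (((k+1).factorial : ℝ))) := by
  intro k
  rw [abs_of_nonneg (by have := hc (k+1); unfold cderiv; positivity)]
  unfold cderiv
  have h1 : ((k:ℝ)+1) * c (k+1) ≤ ((k:ℝ)+1) * (C * d^(k+2) / (((k+1).factorial : ℝ) * ((k+2).factorial : ℝ))) := by
    apply mul_le_mul_of_nonneg_left _ (by positivity)
    exact_mod_cast hup (k+1)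
  refine h1.trans ?_
  have hf1 : ((k+1).factorial : ℝ) = ((k:ℝ)+1) * (k.factorial : ℝ) := by
    rw [Nat.factorial_succ]; push_cast; ring
  have hf2 : ((k+1).factorial : ℝ) ≤ ((k+2).factorial : ℝ) := by
    exact_mod_cast Nat.factorial_le (by omega)
  have hk0 : (0:ℝ) < (k.factorial : ℝ) := by exact_mod_cast Nat.factorial_pos k
  have hk1 : (0:ℝ) < ((k+1).factorial : ℝ) := by exact_mod_cast Nat.factorial_pos (k+1)
  have hk2 : (0:ℝ) < ((k+2).factorial : ℝ) := by exact_mod_cast Nat.factorial_pos (k+2)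
  have key : ((k:ℝ)+1) * (C * d^(k+2) / (((k+1).factorial : ℝ) * ((k+2).factorial : ℝ)))
      = C * d^(k+2) / ((k.factorial : ℝ) * ((k+2).factorial : ℝ)) := by
    rw [hf1]
    field_simp
  rw [key]
  have hC : 0 ≤ C := by
    have h0 := (hc 0).trans (hup 0)
    norm_num [Nat.factorial] at h0
    by_contra hC
    push_neg at hC
    nlinarith [mul_neg_of_neg_of_pos hC hd, hc 0]
  have : C * d^(k+2) / ((k.factorial : ℝ) * ((k+2).factorial : ℝ))
      ≤ C * d^(k+2) / ((k.factorial : ℝ) * ((k+1).factorial : ℝ)) := by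
    apply div_le_div_of_nonneg_left (by positivity) (by positivity)
    nlinarith
  refine this.trans (le_of_eq ?_)
  rw [show k+2 = (k+1)+1 from rfl, pow_succ]
  ring

lemma hasDerivAt_Fser {c : ℕ → ℝ} {d C : ℝ} (hd : 0 < d) (hc : ∀ k, 0 ≤ c k)
    (hup : ∀ k, c k ≤ C * d^(k+1) / ((k.factorial : ℝ) * (((k+1).factorial : ℝ))))
    (u : ℝ) : HasDerivAt (Fser c) (Fser (cderiv c) u) u := by
  have habs : ∀ k, |c k| ≤ C * d^(k+1) / ((k.factorial : ℝ) * (((k+1).factorial : ℝ))) := by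
    intro k; rw [abs_of_nonneg (hc k)]; exact hup k
  have hC : 0 ≤ C := by
    have h0 := (hc 0).trans (hup 0)
    norm_num [Nat.factorial] at h0
    by_contra hC
    push_neg at hC
    nlinarith [mul_neg_of_neg_of_pos hC hd]
  set R := |u| + 1 with hRdef
  have hR1 : (1:ℝ) ≤ R := by rw [hRdef]; linarith [abs_nonneg u]
  have hR0 : (0:ℝ) < R := by linarith
  -- summable bound for derivatives on the ball
  have hbound : Summable (fun n : ℕ => (C * d) * ((2 * d * R)^n / (n.factorial : ℝ))) :=
    (Real.summable_pow_div_factorial (2 * d * R)).mul_left _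
  have hder : ∀ (n : ℕ) (y : ℝ), y ∈ Metric.ball (0:ℝ) R →
      HasDerivAt (fun z => c n * z ^ n) (c n * ((n:ℝ) * y ^ (n-1))) y := by
    intro n y _
    exact (hasDerivAt_pow n y).const_mul (c n)
  have hder_bd : ∀ (n : ℕ) (y : ℝ), y ∈ Metric.ball (0:ℝ) R →
      ‖c n * ((n:ℝ) * y ^ (n-1))‖ ≤ (C * d) * ((2 * d * R)^n / (n.factorial : ℝ)) := by
    intro n y hy
    have hyR : |y| ≤ R := by
      have := Metric.mem_ball.mp hy
      rw [Real.dist_eq, sub_zero] at this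
      linarith
    have h1 : ‖c n * ((n:ℝ) * y ^ (n-1))‖ = c n * ((n:ℝ) * |y| ^ (n-1)) := by
      rw [norm_mul, norm_mul, norm_pow, Real.norm_natCast,
        Real.norm_eq_abs, Real.norm_eq_abs, abs_of_nonneg (hc n)]
    rw [h1]
    have h2 : |y| ^ (n-1) ≤ R ^ n := by
      calc |y| ^ (n-1) ≤ R ^ (n-1) := pow_le_pow_left₀ (abs_nonneg y) hyR _
      _ ≤ R ^ n := pow_le_pow_right₀ hR1 (by omega)
    have h3 : (n:ℝ) ≤ 2 ^ n := by
      exact_mod_cast (Nat.lt_two_pow_self (n := n)).le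
    have h4 : c n * ((n:ℝ) * |y| ^ (n-1)) ≤
        (C * d^(n+1) / ((n.factorial : ℝ) * (((n+1).factorial : ℝ)))) * ((2:ℝ)^n * R^n) := by
      have hnn : (0:ℝ) ≤ (n:ℝ) * |y|^(n-1) := by positivity
      have := mul_le_mul (hup n) (mul_le_mul h3 h2 (by positivity) (by positivity))
        hnn (by positivity)
      exact this
    refine h4.trans ?_
    have h5 : (1:ℝ) ≤ ((n+1).factorial : ℝ) := by
      exact_mod_cast Nat.one_le_iff_ne_zero.mpr (Nat.factorial_pos _).ne'
    have hn0 : (0:ℝ) < (n.factorial : ℝ) := by exact_mod_cast Nat.factorial_pos n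
    have h6 : C * d^(n+1) / ((n.factorial : ℝ) * (((n+1).factorial : ℝ)))
        ≤ C * d^(n+1) / (n.factorial : ℝ) := by
      apply div_le_div_of_nonneg_left (by positivity) (by positivity)
      nlinarith
    calc C * d^(n+1) / ((n.factorial : ℝ) * (((n+1).factorial : ℝ))) * ((2:ℝ)^n * R^n)
        ≤ C * d^(n+1) / (n.factorial : ℝ) * ((2:ℝ)^n * R^n) :=
          mul_le_mul_of_nonneg_right h6 (by positivity)
      _ = (C * d) * ((2 * d * R)^n / (n.factorial : ℝ)) := by
          rw [pow_succ, mul_pow, mul_pow]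
          field_simp
  have hsum0 : Summable (fun n => c n * (0:ℝ) ^ n) := summable_ser hd habs 0
  have hmem : u ∈ Metric.ball (0:ℝ) R := by
    rw [Metric.mem_ball, Real.dist_eq, sub_zero, hRdef]
    linarith [abs_nonneg u]
  have H := hasDerivAt_tsum_of_isPreconnected hbound Metric.isOpen_ball
    ((convex_ball (0:ℝ) R).isPreconnected)
    hder hder_bd (by rw [Metric.mem_ball, Real.dist_eq, sub_zero]; simpa using hR0) hsum0 hmem
  -- identify the derivative value
  have hsumd : Summable (fun n => c n * ((n:ℝ) * u ^ (n-1))) := by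
    apply Summable.of_norm_bounded hbound
    intro n
    exact hder_bd n u hmem
  have hval : (∑' n : ℕ, c n * ((n:ℝ) * u ^ (n-1))) = Fser (cderiv c) u := by
    rw [Summable.tsum_eq_zero_add hsumd]
    simp only [Nat.cast_zero, zero_mul, mul_zero, zero_add]
    unfold Fser cderiv
    apply tsum_congr
    intro k
    simp only [Nat.succ_sub_one]
    push_cast
    ring
  rw [← hval]
  exact H

lemma Fser_nonneg {c : ℕ → ℝ} (hc : ∀ k, 0 ≤ c k) {u : ℝ} (hu : 0 ≤ u) : 0 ≤ Fser c u :=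
  tsum_nonneg fun k => mul_nonneg (hc k) (pow_nonneg hu k)

lemma Fser_ge_term {c : ℕ → ℝ} (hc : ∀ k, 0 ≤ c k) {u : ℝ}
    (hs : Summable (fun k => c k * u ^ k))
    (hu : 0 ≤ u) (k : ℕ) : c k * u ^ k ≤ Fser c u :=
  Summable.le_tsum hs k fun j _ => mul_nonneg (hc j) (pow_nonneg hu j)

set_option maxHeartbeats 2000000 in
lemma deriv_le_main {c : ℕ → ℝ} {d C₁ C₂ : ℝ} (hd : 0 < d) (hC₁ : 0 < C₁)
    (hlow : ∀ k, C₁ * d^(k+1) / ((k.factorial : ℝ) * ((k+1).factorial : ℝ)) ≤ c k)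
    (hup : ∀ k, c k ≤ C₂ * d^(k+1) / ((k.factorial : ℝ) * ((k+1).factorial : ℝ)))
    {α : ℝ} (hα : 0 < α) :
    ∃ u₀ : ℝ, 1 ≤ u₀ ∧ ∀ u, u₀ ≤ u → Fser (cderiv c) u ≤ α * Fser c u := by
  have hc : ∀ k, 0 < c k := fun k => lt_of_lt_of_le (by positivity) (hlow k)
  have hcn : ∀ k, 0 ≤ c k := fun k => (hc k).le
  have habs : ∀ k, |c k| ≤ C₂ * d^(k+1) / ((k.factorial : ℝ) * ((k+1).factorial : ℝ)) :=
    fun k => by rw [abs_of_nonneg (hcn k)]; exact hup k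
  have hcd : ∀ k, 0 ≤ cderiv c k := fun k =>
    mul_nonneg (by positivity) (hcn (k+1))
  have hsc : ∀ u : ℝ, Summable (fun k => c k * u^k) := summable_ser hd habs
  have hscd : ∀ u : ℝ, Summable (fun k => cderiv c k * u^k) :=
    summable_ser hd (cderiv_up hd hcn hup)
  obtain ⟨K, hKdef⟩ : ∃ K : ℕ, 2*C₂*d/(α*C₁) ≤ (K:ℝ) := ⟨⌈2*C₂*d/(α*C₁)⌉₊, Nat.le_ceil _⟩
  have hC₂ : 0 < C₂ := by
    have h0 := lt_of_lt_of_le (hc 0) (hup 0)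
    norm_num [Nat.factorial] at h0
    nlinarith
  have htail : ∀ k, K ≤ k → cderiv c k ≤ (α/2) * c k := by
    intro k hk
    have h1 : cderiv c k ≤ ((k:ℝ)+1) *
        (C₂ * d^(k+1+1) / (((k+1).factorial : ℝ) * ((k+1+1).factorial : ℝ))) := by
      unfold cderiv
      apply mul_le_mul_of_nonneg_left _ (by positivity)
      have := hup (k+1)
      push_cast at this ⊢
      convert this using 4 <;> push_cast <;> ring
    have hcond : 2*C₂*d ≤ α*C₁*((k:ℝ)+2) := by
      have hkK : ((K:ℕ):ℝ) ≤ (k:ℝ) := by exact_mod_cast hk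
      have h2 : 2*C₂*d/(α*C₁) ≤ (k:ℝ) := le_trans hKdef hkK
      have h3 := (div_le_iff₀ (by positivity)).mp h2
      nlinarith
    set F0 := (k.factorial : ℝ) with hF0
    set F1 := ((k+1).factorial : ℝ) with hF1
    set F2 := ((k+2).factorial : ℝ) with hF2
    have hF0p : 0 < F0 := by rw [hF0]; exact_mod_cast Nat.factorial_pos k
    have hF1p : 0 < F1 := by rw [hF1]; exact_mod_cast Nat.factorial_pos (k+1)
    have hF2p : 0 < F2 := by rw [hF2]; exact_mod_cast Nat.factorial_pos (k+2)
    have h10 : F1 = ((k:ℝ)+1) * F0 := by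
      rw [hF1, hF0, Nat.factorial_succ]; push_cast; ring
    have h21 : F2 = ((k:ℝ)+2) * F1 := by
      rw [hF2, hF1, show k+2 = (k+1)+1 from rfl, Nat.factorial_succ]; push_cast; ring
    refine h1.trans ?_
    have key : ((k:ℝ)+1) * (C₂ * d^(k+1+1) / (F1 * F2)) = (C₂*d) * (d^(k+1)/(F0*F2)) := by
      rw [h10, pow_succ]
      field_simp
    have key2 : (α/2) * c k ≥ (α/2) * (C₁ * d^(k+1)/(F0*F1)) := by
      apply mul_le_mul_of_nonneg_left _ (by positivity)
      exact hlow k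
    refine le_trans ?_ key2
    have key3 : (α/2) * (C₁ * d^(k+1)/(F0*F1)) = ((α*C₁*((k:ℝ)+2))/2) * (d^(k+1)/(F0*F2)) := by
      rw [h21]
      field_simp
    rw [key, key3]
    apply mul_le_mul_of_nonneg_right _ (by positivity)
    linarith
  set B := ∑ i ∈ Finset.range K, cderiv c i with hBdef
  have hB0 : 0 ≤ B := Finset.sum_nonneg fun i _ => hcd i
  have hq0 : 0 ≤ 2*B/(α * c K) := div_nonneg (by linarith) (mul_pos hα (hc K)).le
  refine ⟨1 + 2*B/(α * c K), by linarith, ?_⟩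
  intro u hu
  have hu1 : (1:ℝ) ≤ u := by linarith
  have hu0 : (0:ℝ) < u := by linarith
  have hun : (0:ℝ) ≤ u := hu0.le
  -- split derivative series
  have split_d := Summable.sum_add_tsum_nat_add (f := fun k => cderiv c k * u^k) K (hscd u)
  have split_c := Summable.sum_add_tsum_nat_add (f := fun k => c k * u^k) K (hsc u)
  have head_c_nonneg : 0 ≤ ∑ i ∈ Finset.range K, c i * u^i :=
    Finset.sum_nonneg fun i _ => mul_nonneg (hcn i) (pow_nonneg hun i)
  have tail_c_le : (∑' i, c (i+K) * u^(i+K)) ≤ Fser c u := by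
    have : (∑ i ∈ Finset.range K, c i * u^i) + (∑' i, c (i+K) * u^(i+K)) = Fser c u := split_c
    linarith
  have tail_bound : (∑' i, cderiv c (i+K) * u^(i+K)) ≤ (α/2) * Fser c u := by
    have hs1 : Summable (fun i : ℕ => cderiv c (i+K) * u^(i+K)) :=
      (summable_nat_add_iff K).mpr (hscd u)
    have hs2 : Summable (fun i : ℕ => (α/2) * (c (i+K) * u^(i+K))) :=
      ((summable_nat_add_iff K).mpr (hsc u)).mul_left (α/2)
    have hle : ∀ i : ℕ, cderiv c (i+K) * u^(i+K) ≤ (α/2) * (c (i+K) * u^(i+K)) := by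
      intro i
      rw [← mul_assoc]
      exact mul_le_mul_of_nonneg_right (htail (i+K) (Nat.le_add_left K i)) (pow_nonneg hun _)
    have h1 : (∑' i, cderiv c (i+K) * u^(i+K)) ≤ ∑' i, (α/2) * (c (i+K) * u^(i+K)) :=
      Summable.tsum_le_tsum hle hs1 hs2
    rw [tsum_mul_left] at h1
    refine h1.trans ?_
    apply mul_le_mul_of_nonneg_left tail_c_le (by linarith)
  have head_bound : (∑ i ∈ Finset.range K, cderiv c i * u^i) ≤ (α/2) * Fser c u := by
    have h1 : (∑ i ∈ Finset.range K, cderiv c i * u^i)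
        ≤ ∑ i ∈ Finset.range K, cderiv c i * (u^K/u) := by
      apply Finset.sum_le_sum
      intro i hi
      apply mul_le_mul_of_nonneg_left _ (hcd i)
      have hiK : i + 1 ≤ K := Finset.mem_range.mp hi
      have h2 : u^i * u ≤ u^K := by
        rw [← pow_succ]
        exact pow_le_pow_right₀ hu1 hiK
      rw [le_div_iff₀ hu0]
      exact h2
    rw [← Finset.sum_mul] at h1
    refine h1.trans ?_
    have hcK : 0 < c K := hc K
    have h3 : 2*B ≤ u * (α * c K) := by
      have h4 : 2*B/(α * c K) ≤ u := by
        have : 1 + 2*B/(α * c K) ≤ u := hu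
        have hnn : 0 ≤ 2*B/(α*c K) := by positivity
        linarith
      calc 2*B = (2*B/(α * c K)) * (α * c K) := by field_simp
      _ ≤ u * (α * c K) := mul_le_mul_of_nonneg_right h4 (by positivity)
    have h6 : B/u ≤ (α/2) * c K := by
      rw [div_le_iff₀ hu0]
      nlinarith
    have h5 : B * (u^K/u) ≤ (α/2) * (c K * u^K) := by
      calc B * (u^K/u) = (B/u) * u^K := by ring
      _ ≤ ((α/2) * c K) * u^K := mul_le_mul_of_nonneg_right h6 (pow_nonneg hun K)
      _ = (α/2) * (c K * u^K) := by ring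
    refine h5.trans ?_
    exact mul_le_mul_of_nonneg_left (Fser_ge_term hcn (hsc u) hun K) (by linarith)
  have : Fser (cderiv c) u = (∑ i ∈ Finset.range K, cderiv c i * u^i)
      + (∑' i, cderiv c (i+K) * u^(i+K)) := split_d.symm
  rw [this]
  linarith

lemma zygmund_of_bounds {c : ℕ → ℝ} {d C₁ C₂ : ℝ} (hd : 0 < d) (hC₁ : 0 < C₁)
    (hlow : ∀ k, C₁ * d^(k+1) / ((k.factorial : ℝ) * ((k+1).factorial : ℝ)) ≤ c k)
    (hup : ∀ k, c k ≤ C₂ * d^(k+1) / ((k.factorial : ℝ) * ((k+1).factorial : ℝ)))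
    {α : ℝ} (hα : 0 < α) :
    (∃ x₁ : ℝ, 1 < x₁ ∧
        MonotoneOn (fun x : ℝ => x ^ α * Fser c (Real.log x)) (Set.Ici x₁)) ∧
    (∃ x₁ : ℝ, 1 < x₁ ∧
        AntitoneOn (fun x : ℝ => x ^ (-α) * Fser c (Real.log x)) (Set.Ici x₁)) := by
  have hc : ∀ k, 0 < c k := fun k => lt_of_lt_of_le (by positivity) (hlow k)
  have hcn : ∀ k, 0 ≤ c k := fun k => (hc k).le
  have habs : ∀ k, |c k| ≤ C₂ * d^(k+1) / ((k.factorial : ℝ) * ((k+1).factorial : ℝ)) :=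
    fun k => by rw [abs_of_nonneg (hcn k)]; exact hup k
  have hcd : ∀ k, 0 ≤ cderiv c k := fun k =>
    mul_nonneg (by positivity) (hcn (k+1))
  have hsc : ∀ u : ℝ, Summable (fun k => c k * u^k) := summable_ser hd habs
  -- derivative of x ↦ x^β * F(log x) for x > 0
  have hder : ∀ (β : ℝ) (x : ℝ), 0 < x →
      HasDerivAt (fun x : ℝ => x ^ β * Fser c (Real.log x))
        (β * x^(β-1) * Fser c (Real.log x)
          + x^β * (Fser (cderiv c) (Real.log x) * x⁻¹)) x := by
    intro β x hx
    have h1 : HasDerivAt (fun x : ℝ => x ^ β) (β * x^(β-1)) x :=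
      Real.hasDerivAt_rpow_const (Or.inl hx.ne')
    have h2 : HasDerivAt Real.log x⁻¹ x := Real.hasDerivAt_log hx.ne'
    have h3 : HasDerivAt (Fser c) (Fser (cderiv c) (Real.log x)) (Real.log x) :=
      hasDerivAt_Fser hd hcn hup (Real.log x)
    exact h1.mul (h3.comp x h2)
  constructor
  · -- monotone part, x₁ = 2
    refine ⟨2, one_lt_two, ?_⟩
    apply monotoneOn_of_deriv_nonneg (convex_Ici 2)
    · intro x hx
      have hx0 : (0:ℝ) < x := lt_of_lt_of_le (by norm_num) hx
      exact ((hder α x hx0).continuousAt).continuousWithinAt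
    · intro x hx
      rw [interior_Ici] at hx
      have hx0 : (0:ℝ) < x := lt_trans (by norm_num) hx
      exact ((hder α x hx0).differentiableAt).differentiableWithinAt
    · intro x hx
      rw [interior_Ici] at hx
      have hx0 : (0:ℝ) < x := lt_trans (by norm_num) hx
      have hx1 : (1:ℝ) ≤ x := by
        have : (2:ℝ) < x := hx
        linarith
      rw [(hder α x hx0).deriv]
      have hlg : 0 ≤ Real.log x := Real.log_nonneg hx1
      have hF : 0 ≤ Fser c (Real.log x) := Fser_nonneg hcn hlg
      have hFd : 0 ≤ Fser (cderiv c) (Real.log x) := Fser_nonneg hcd hlg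
      have h1 : 0 ≤ x^(α-1) := Real.rpow_nonneg hx0.le _
      have h2 : 0 ≤ x^α := Real.rpow_nonneg hx0.le _
      have h3 : 0 ≤ x⁻¹ := by positivity
      positivity
  · -- antitone part
    obtain ⟨u₀, hu₀1, hu₀⟩ := deriv_le_main hd hC₁ hlow hup hα
    refine ⟨Real.exp u₀, ?_, ?_⟩
    · calc (1:ℝ) = Real.exp 0 := Real.exp_zero.symm
      _ < Real.exp u₀ := Real.exp_lt_exp.mpr (by linarith)
    · have hx₁1 : (1:ℝ) < Real.exp u₀ := by
        calc (1:ℝ) = Real.exp 0 := Real.exp_zero.symm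
        _ < Real.exp u₀ := Real.exp_lt_exp.mpr (by linarith)
      apply antitoneOn_of_deriv_nonpos (convex_Ici _)
      · intro x hx
        have hx0 : (0:ℝ) < x := lt_of_lt_of_le (by linarith) hx
        exact ((hder (-α) x hx0).continuousAt).continuousWithinAt
      · intro x hx
        rw [interior_Ici] at hx
        have hx0 : (0:ℝ) < x := lt_trans (by linarith) hx
        exact ((hder (-α) x hx0).differentiableAt).differentiableWithinAt
      · intro x hx
        rw [interior_Ici] at hx
        have hxe : Real.exp u₀ < x := hx
        have hx0 : (0:ℝ) < x := lt_trans (by linarith) hx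
        rw [(hder (-α) x hx0).deriv]
        have hlgu : u₀ ≤ Real.log x := by
          rw [← Real.log_exp u₀]
          exact Real.log_le_log (Real.exp_pos _) hxe.le
        have hlg : 0 ≤ Real.log x := le_trans (by linarith) hlgu
        have hF : 0 ≤ Fser c (Real.log x) := Fser_nonneg hcn hlg
        have hkey : Fser (cderiv c) (Real.log x) ≤ α * Fser c (Real.log x) :=
          hu₀ _ hlgu
        have hpw : x^(-α) * x⁻¹ = x^(-α-1) := by
          rw [← Real.rpow_neg_one x, ← Real.rpow_add hx0]
          congr 1
        have heq : -α * x^(-α-1) * Fser c (Real.log x)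
              + x^(-α) * (Fser (cderiv c) (Real.log x) * x⁻¹)
            = x^(-α-1) * (Fser (cderiv c) (Real.log x) - α * Fser c (Real.log x)) := by
          rw [← hpw]
          ring
        rw [heq]
        apply mul_nonpos_of_nonneg_of_nonpos (Real.rpow_nonneg hx0.le _)
        linarith


/-- Lemma: `x ↦ H₁(t,x)` and `x ↦ H₂(t,1/x)` belong to the Zygmund
class.  For every `α > 0`, `x ↦ x^α H₁(t,x)` is ultimately increasing and
`x ↦ x^{−α} H₁(t,x)` is ultimately decreasing, and the same holds for
`x ↦ H₂(t,1/x)`. -/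
theorem H_functions_in_zygmund_class
    (t lam η₁ η₂ p q : ℝ)
    (ht : 0 < t) (hlam : 0 < lam) (hη₁ : 1 < η₁) (hη₂ : 0 < η₂)
    (hp : 0 < p) (hq : 0 < q) (hpq : p + q = 1) :
    ∀ α : ℝ, 0 < α →
      ((∃ x₁ : ℝ, 1 < x₁ ∧
          MonotoneOn (fun x => x ^ α * H1fun lam t η₁ η₂ p q x) (Set.Ici x₁)) ∧
       (∃ x₁ : ℝ, 1 < x₁ ∧
          AntitoneOn (fun x => x ^ (-α) * H1fun lam t η₁ η₂ p q x) (Set.Ici x₁))) ∧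
      ((∃ x₁ : ℝ, 1 < x₁ ∧
          MonotoneOn (fun x => x ^ α * H2fun lam t η₁ η₂ p q x⁻¹) (Set.Ici x₁)) ∧
       (∃ x₁ : ℝ, 1 < x₁ ∧
          AntitoneOn (fun x => x ^ (-α) * H2fun lam t η₁ η₂ p q x⁻¹) (Set.Ici x₁))) := by
  intro α hα
  have hr : 0 < lam * t := mul_pos hlam ht
  have hη₁0 : 0 < η₁ := lt_trans one_pos hη₁
  have hda : 0 < η₁ * (lam*t) * p := by positivity
  have hdb : 0 < η₂ * (lam*t) * q := by positivity
  have hZa := zygmund_of_bounds (c := aCoef lam t η₁ η₂ p q) hda (Real.exp_pos (-(lam*t)))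
    (fun k => (aCoef_bounds hη₁0 hη₂ hp hq hpq hr k).1)
    (fun k => (aCoef_bounds hη₁0 hη₂ hp hq hpq hr k).2) hα
  have hZb := zygmund_of_bounds (c := aCoef lam t η₂ η₁ q p) hdb (Real.exp_pos (-(lam*t)))
    (fun k => (aCoef_bounds hη₂ hη₁0 hq hp (by linarith) hr k).1)
    (fun k => (aCoef_bounds hη₂ hη₁0 hq hp (by linarith) hr k).2) hα
  have hH2 : (fun x : ℝ => H2fun lam t η₁ η₂ p q x⁻¹)
      = fun x : ℝ => Fser (aCoef lam t η₂ η₁ q p) (Real.log x) := by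
    funext x
    unfold H2fun G2m
    rw [inv_inv, bCoef_eq_aCoef]
    rfl
  have hH1 : (fun x : ℝ => H1fun lam t η₁ η₂ p q x)
      = fun x : ℝ => Fser (aCoef lam t η₁ η₂ p q) (Real.log x) := rfl
  refine ⟨⟨?_, ?_⟩, ?_, ?_⟩
  · obtain ⟨x₁, hx₁, hmono⟩ := hZa.1
    exact ⟨x₁, hx₁, hmono⟩
  · obtain ⟨x₁, hx₁, hanti⟩ := hZa.2
    exact ⟨x₁, hx₁, hanti⟩
  · obtain ⟨x₁, hx₁, hmono⟩ := hZb.1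
    refine ⟨x₁, hx₁, ?_⟩
    have he : (fun x : ℝ => x ^ α * H2fun lam t η₁ η₂ p q x⁻¹)
        = fun x : ℝ => x ^ α * Fser (aCoef lam t η₂ η₁ q p) (Real.log x) := by
      funext x
      rw [congrFun hH2 x]
    rw [he]
    exact hmono
  · obtain ⟨x₁, hx₁, hanti⟩ := hZb.2
    refine ⟨x₁, hx₁, ?_⟩
    have he : (fun x : ℝ => x ^ (-α) * H2fun lam t η₁ η₂ p q x⁻¹)
        = fun x : ℝ => x ^ (-α) * Fser (aCoef lam t η₂ η₁ q p) (Real.log x) := by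
      funext x
      rw [congrFun hH2 x]
    rw [he]
    exact hanti
end

section
/- Let t > 0, λ > 0, η₁ > 1, η₂ > 0, and p, q > 0 with p + q = 1. Then there exists c > 0 such that for all k ≥ 2, k·a_k/a_{k−1} ≤ c/(k+1); consequently, for every ε > 0 there is a positive integer k_ε such that k·a_k ≤ ε·a_{k−1} for all k > k_ε. -/
open Filter Asymptotics MeasureTheory

section AuxStatement8

lemma my_choose_le_two_pow (n k : ℕ) : n.choose k ≤ 2 ^ n := by
  rcases le_or_gt k n with h | h
  · calc n.choose k ≤ ∑ m ∈ Finset.range (n+1), n.choose m :=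
        Finset.single_le_sum (fun i _ => Nat.zero_le _) (by simp; omega)
    _ = 2 ^ n := Nat.sum_range_choose n
  · simp [Nat.choose_eq_zero_of_lt h]

lemma my_aux_choose_sum (m : ℕ) :
    (∑ j ∈ Finset.range m, (m-1).choose j * m.choose j) ≤ 4 ^ m := by
  rcases Nat.eq_zero_or_pos m with h | h
  · simp [h]
  obtain ⟨n, rfl⟩ : ∃ n, m = n + 1 := ⟨m - 1, by omega⟩
  simp only [Nat.add_sub_cancel]
  calc ∑ j ∈ Finset.range (n+1), n.choose j * (n+1).choose j
      ≤ ∑ j ∈ Finset.range (n+1), n.choose j * 2 ^ (n+1) :=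
        Finset.sum_le_sum fun j _ => Nat.mul_le_mul_left _ (my_choose_le_two_pow (n+1) j)
    _ = 2 ^ n * 2 ^ (n+1) := by rw [← Finset.sum_mul, Nat.sum_range_choose]
    _ ≤ 2 ^ (n+1) * 2 ^ (n+1) :=
        Nat.mul_le_mul_right _ (Nat.pow_le_pow_right (by norm_num) (by omega))
    _ = 4 ^ (n+1) := by rw [← Nat.mul_pow]

lemma my_Pcoef_self (η₁ η₂ p q : ℝ) (n : ℕ) : Pcoef η₁ η₂ p q n n = p ^ n := by
  simp [Pcoef]

lemma my_Pcoef_nonneg {η₁ η₂ p q : ℝ} (hη₁ : 0 < η₁) (hη₂ : 0 < η₂)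
    (hp : 0 < p) (hq : 0 < q) (n k : ℕ) : 0 ≤ Pcoef η₁ η₂ p q n k := by
  unfold Pcoef
  split
  · positivity
  · refine Finset.sum_nonneg fun i _ => ?_
    have h1 : (0:ℝ) ≤ η₁ / (η₁ + η₂) := by positivity
    have h2 : (0:ℝ) ≤ η₂ / (η₁ + η₂) := by positivity
    positivity

lemma my_Pcoef_le {η₁ η₂ p q : ℝ} (hη₁ : 0 < η₁) (hη₂ : 0 < η₂)
    (hp : 0 < p) (hq : 0 < q) (hpq : p + q = 1) (n K : ℕ) (hKn : K ≤ n) :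
    Pcoef η₁ η₂ p q n K ≤ p ^ K * (n.choose K : ℝ) * 4 ^ (n - K) := by
  have hs : (0:ℝ) < η₁ + η₂ := by linarith
  have hx0 : (0:ℝ) ≤ η₁ / (η₁ + η₂) := by positivity
  have hx1 : η₁ / (η₁ + η₂) ≤ 1 := by rw [div_le_one hs]; linarith
  have hy0 : (0:ℝ) ≤ η₂ / (η₁ + η₂) := by positivity
  have hy1 : η₂ / (η₁ + η₂) ≤ 1 := by rw [div_le_one hs]; linarith
  have hp1 : p ≤ 1 := by linarith
  have hq1 : q ≤ 1 := by linarith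
  unfold Pcoef
  split
  case isTrue h =>
    subst h
    simp [Nat.choose_self]
  case isFalse h =>
    calc ∑ i ∈ Finset.Ico K n,
        ((n - K - 1).choose (i - K) : ℝ) * (n.choose i : ℝ) *
          (η₁ / (η₁ + η₂)) ^ (i - K) * (η₂ / (η₁ + η₂)) ^ (n - i) * p ^ i * q ^ (n - i)
        ≤ ∑ i ∈ Finset.Ico K n,
          p ^ K * (n.choose K : ℝ) * (((n - K - 1).choose (i - K) : ℝ) * ((n - K).choose (i - K) : ℝ)) := by
          refine Finset.sum_le_sum fun i hi => ?_
          obtain ⟨hKi, hin⟩ := Finset.mem_Ico.mp hi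
          have hB : (n.choose i : ℝ) ≤ (n.choose K : ℝ) * ((n - K).choose (i - K) : ℝ) := by
            have h1 : n.choose i * i.choose K = n.choose K * (n - K).choose (i - K) :=
              Nat.choose_mul hKi
            have h2 : 1 ≤ i.choose K := Nat.choose_pos hKi
            have h3 : n.choose i ≤ n.choose K * (n - K).choose (i - K) := by
              calc n.choose i ≤ n.choose i * i.choose K := Nat.le_mul_of_pos_right _ h2
                _ = _ := h1
            exact_mod_cast h3
          have hxp : (η₁ / (η₁ + η₂)) ^ (i - K) ≤ 1 := pow_le_one₀ hx0 hx1
          have hyp : (η₂ / (η₁ + η₂)) ^ (n - i) ≤ 1 := pow_le_one₀ hy0 hy1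
          have hqp : q ^ (n - i) ≤ 1 := pow_le_one₀ hq.le hq1
          have hpi : p ^ i ≤ p ^ K := pow_le_pow_of_le_one hp.le hp1 hKi
          calc ((n - K - 1).choose (i - K) : ℝ) * (n.choose i : ℝ) *
              (η₁ / (η₁ + η₂)) ^ (i - K) * (η₂ / (η₁ + η₂)) ^ (n - i) * p ^ i * q ^ (n - i)
              ≤ ((n - K - 1).choose (i - K) : ℝ) *
                ((n.choose K : ℝ) * ((n - K).choose (i - K) : ℝ)) * 1 * 1 * p ^ K * 1 := by
                gcongr
            _ = p ^ K * (n.choose K : ℝ) *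
                (((n - K - 1).choose (i - K) : ℝ) * ((n - K).choose (i - K) : ℝ)) := by ring
      _ = p ^ K * (n.choose K : ℝ) * ∑ i ∈ Finset.Ico K n,
            (((n - K - 1).choose (i - K) : ℝ) * ((n - K).choose (i - K) : ℝ)) := by
          rw [← Finset.mul_sum]
      _ ≤ p ^ K * (n.choose K : ℝ) * 4 ^ (n - K) := by
          have hsum : ∑ i ∈ Finset.Ico K n,
              (((n - K - 1).choose (i - K) : ℝ) * ((n - K).choose (i - K) : ℝ)) ≤ 4 ^ (n - K) := by
            rw [Finset.sum_Ico_eq_sum_range]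
            simp only [Nat.add_sub_cancel_left]
            calc ∑ j ∈ Finset.range (n - K),
                (((n - K - 1).choose j : ℝ) * ((n - K).choose j : ℝ))
                = ((∑ j ∈ Finset.range (n - K), (n - K - 1).choose j * (n - K).choose j : ℕ) : ℝ) := by
                  push_cast; rfl
              _ ≤ ((4 ^ (n - K) : ℕ) : ℝ) := Nat.cast_le.mpr (my_aux_choose_sum (n - K))
              _ = 4 ^ (n - K) := by push_cast; rfl
          gcongr

lemma my_S_bounds {t lam η₁ η₂ p q : ℝ}
    (ht : 0 < t) (hlam : 0 < lam) (hη₁ : 0 < η₁) (hη₂ : 0 < η₂)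
    (hp : 0 < p) (hq : 0 < q) (hpq : p + q = 1) (K : ℕ) :
    Real.exp (-(lam*t)) * (lam*t*p) ^ K / (K.factorial : ℝ) ≤
      (∑' m : ℕ, poisCoef lam t (m + K) * Pcoef η₁ η₂ p q (m + K) K) ∧
    (∑' m : ℕ, poisCoef lam t (m + K) * Pcoef η₁ η₂ p q (m + K) K) ≤
      Real.exp (-(lam*t)) * Real.exp (4*(lam*t)) * (lam*t*p) ^ K / (K.factorial : ℝ) := by
  set f : ℕ → ℝ := fun m => poisCoef lam t (m + K) * Pcoef η₁ η₂ p q (m + K) K with hf_def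
  set g : ℕ → ℝ := fun m =>
    (Real.exp (-(lam*t)) * (lam*t*p) ^ K / (K.factorial : ℝ)) * ((4*(lam*t)) ^ m / (m.factorial : ℝ))
    with hg_def
  have hpois_nonneg : ∀ n : ℕ, 0 ≤ poisCoef lam t n := by
    intro n; unfold poisCoef; positivity
  have hf_nonneg : ∀ m, 0 ≤ f m := fun m =>
    mul_nonneg (hpois_nonneg _) (my_Pcoef_nonneg hη₁ hη₂ hp hq _ _)
  have hfg : ∀ m, f m ≤ g m := by
    intro m
    have h1 : f m ≤ poisCoef lam t (m + K) * (p ^ K * ((m + K).choose K : ℝ) * 4 ^ m) := by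
      have := my_Pcoef_le hη₁ hη₂ hp hq hpq (m + K) K (Nat.le_add_left K m)
      rw [Nat.add_sub_cancel] at this
      exact mul_le_mul_of_nonneg_left this (hpois_nonneg _)
    refine h1.trans (le_of_eq ?_)
    have hfac : ((m + K).choose K : ℝ) * (K.factorial : ℝ) * (m.factorial : ℝ)
        = ((m + K).factorial : ℝ) := by
      have := Nat.choose_mul_factorial_mul_factorial (Nat.le_add_left K m)
      rw [Nat.add_sub_cancel] at this
      exact_mod_cast this
    have hKfac : ((K.factorial : ℕ) : ℝ) ≠ 0 := Nat.cast_ne_zero.mpr K.factorial_ne_zero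
    have hmfac : ((m.factorial : ℕ) : ℝ) ≠ 0 := Nat.cast_ne_zero.mpr m.factorial_ne_zero
    have hmKfac : (((m + K).factorial : ℕ) : ℝ) ≠ 0 :=
      Nat.cast_ne_zero.mpr (m + K).factorial_ne_zero
    unfold poisCoef
    rw [hg_def]
    field_simp
    rw [← hfac]
    ring
  have hg_sum : Summable g :=
    (Real.summable_pow_div_factorial (4*(lam*t))).mul_left _
  have hf_sum : Summable f := Summable.of_nonneg_of_le hf_nonneg hfg hg_sum
  constructor
  · have h0 : f 0 ≤ ∑' m, f m := Summable.le_tsum hf_sum 0 fun m _ => hf_nonneg m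
    refine le_trans (le_of_eq ?_) h0
    show _ = poisCoef lam t (0 + K) * Pcoef η₁ η₂ p q (0 + K) K
    rw [zero_add, my_Pcoef_self]
    unfold poisCoef
    rw [mul_pow]
    ring
  · calc (∑' m, f m) ≤ ∑' m, g m := Summable.tsum_le_tsum hfg hf_sum hg_sum
      _ = (Real.exp (-(lam*t)) * (lam*t*p) ^ K / (K.factorial : ℝ)) *
            (∑' m : ℕ, (4*(lam*t)) ^ m / (m.factorial : ℝ)) := tsum_mul_left
      _ = _ := by
          have hexp : (∑' m : ℕ, (4*(lam*t)) ^ m / (m.factorial : ℝ)) = Real.exp (4*(lam*t)) := by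
            rw [Real.exp_eq_exp_ℝ, NormedSpace.exp_eq_tsum_div]
          rw [hexp]; ring

end AuxStatement8


/-- ratio estimate for the coefficients `a_k`.  There exists `c > 0`
such that `k a_k / a_{k−1} ≤ c/(k+1)` for all `k ≥ 2`; consequently, for every `ε > 0`
there is a positive integer `k_ε` with `k a_k ≤ ε a_{k−1}` for all `k > k_ε`. -/
theorem aCoef_ratio_estimate
    (t lam η₁ η₂ p q : ℝ)
    (ht : 0 < t) (hlam : 0 < lam) (hη₁ : 1 < η₁) (hη₂ : 0 < η₂)
    (hp : 0 < p) (hq : 0 < q) (hpq : p + q = 1) :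
    (∃ c : ℝ, 0 < c ∧ ∀ k : ℕ, 2 ≤ k →
      (k : ℝ) * aCoef lam t η₁ η₂ p q k / aCoef lam t η₁ η₂ p q (k - 1) ≤
        c / ((k : ℝ) + 1)) ∧
    ∀ ε : ℝ, 0 < ε → ∃ kε : ℕ, 0 < kε ∧ ∀ k : ℕ, kε < k →
      (k : ℝ) * aCoef lam t η₁ η₂ p q k ≤ ε * aCoef lam t η₁ η₂ p q (k - 1) := by
  have hη₁0 : (0:ℝ) < η₁ := lt_trans one_pos hη₁
  set c := η₁ * (lam * t * p) * Real.exp (4 * (lam * t)) with hc_def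
  have hcpos : 0 < c := by positivity
  have hpos : ∀ j : ℕ, 0 < aCoef lam t η₁ η₂ p q j := by
    intro j
    have hS := (my_S_bounds ht hlam hη₁0 hη₂ hp hq hpq (j+1)).1
    have hL : 0 < Real.exp (-(lam*t)) * (lam*t*p) ^ (j+1) / ((j+1).factorial : ℝ) := by
      positivity
    have h2 : 0 < η₁ ^ (j+1) / (j.factorial : ℝ) := by positivity
    exact mul_pos h2 (lt_of_lt_of_le hL hS)
  have hmain : ∀ k : ℕ, 2 ≤ k →
      (k : ℝ) * aCoef lam t η₁ η₂ p q k / aCoef lam t η₁ η₂ p q (k - 1) ≤ c / ((k : ℝ) + 1) := by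
    intro k hk
    have hk1 : k - 1 + 1 = k := by omega
    have hSk := (my_S_bounds ht hlam hη₁0 hη₂ hp hq hpq k).1
    have hSk1 := (my_S_bounds ht hlam hη₁0 hη₂ hp hq hpq (k+1)).2
    have hak : aCoef lam t η₁ η₂ p q k ≤ η₁ ^ (k+1) / (k.factorial : ℝ) *
        (Real.exp (-(lam*t)) * Real.exp (4*(lam*t)) * (lam*t*p) ^ (k+1) / ((k+1).factorial : ℝ)) := by
      unfold aCoef
      exact mul_le_mul_of_nonneg_left hSk1 (by positivity)
    have hak1 : η₁ ^ k / ((k-1).factorial : ℝ) *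
        (Real.exp (-(lam*t)) * (lam*t*p) ^ k / (k.factorial : ℝ)) ≤
        aCoef lam t η₁ η₂ p q (k - 1) := by
      unfold aCoef
      rw [hk1]
      exact mul_le_mul_of_nonneg_left hSk (by positivity)
    have hD : 0 < η₁ ^ k / ((k-1).factorial : ℝ) *
        (Real.exp (-(lam*t)) * (lam*t*p) ^ k / (k.factorial : ℝ)) := by positivity
    have hstep : (k : ℝ) * aCoef lam t η₁ η₂ p q k / aCoef lam t η₁ η₂ p q (k - 1) ≤
        ((k : ℝ) * (η₁ ^ (k+1) / (k.factorial : ℝ) *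
          (Real.exp (-(lam*t)) * Real.exp (4*(lam*t)) * (lam*t*p) ^ (k+1) / ((k+1).factorial : ℝ)))) /
        (η₁ ^ k / ((k-1).factorial : ℝ) *
          (Real.exp (-(lam*t)) * (lam*t*p) ^ k / (k.factorial : ℝ))) := by
      refine div_le_div₀ (by positivity) ?_ hD hak1
      exact mul_le_mul_of_nonneg_left hak (Nat.cast_nonneg k)
    refine hstep.trans (le_of_eq ?_)
    have hkR : (0:ℝ) < (k : ℝ) := by exact_mod_cast (by omega : 0 < k)
    have hkfac : (k.factorial : ℝ) = (k : ℝ) * ((k-1).factorial : ℝ) := by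
      exact_mod_cast (Nat.mul_factorial_pred (by omega)).symm
    have hk1fac : ((k+1).factorial : ℝ) = ((k : ℝ) + 1) * (k.factorial : ℝ) := by
      exact_mod_cast Nat.factorial_succ k
    have hfne : ((k-1).factorial : ℝ) ≠ 0 := Nat.cast_ne_zero.mpr (k-1).factorial_ne_zero
    have hexpne : Real.exp (-(lam*t)) ≠ 0 := Real.exp_ne_zero _
    have hltp : (0:ℝ) < lam * t * p := by positivity
    rw [hk1fac, hkfac, hc_def]
    rw [pow_succ η₁ k, pow_succ (lam*t*p) k]
    field_simp
  refine ⟨⟨c, hcpos, hmain⟩, ?_⟩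
  intro ε hε
  obtain ⟨n, hn⟩ := exists_nat_gt (c / ε)
  refine ⟨max n 2, lt_of_lt_of_le two_pos (le_max_right n 2), ?_⟩
  intro k hk
  have hk2 : 2 ≤ k := le_trans (le_max_right n 2) (le_of_lt hk)
  have hnk : n < k := lt_of_le_of_lt (le_max_left n 2) hk
  have hr := hmain k hk2
  have hce : c / ((k : ℝ) + 1) ≤ ε := by
    rw [div_le_iff₀ (by positivity)]
    have h1 : c < ε * n := by
      have := (div_lt_iff₀ hε).mp hn
      linarith
    have h2 : (n : ℝ) ≤ (k : ℝ) + 1 := by exact_mod_cast Nat.le_succ_of_le (le_of_lt hnk)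
    nlinarith
  have hfin : (k : ℝ) * aCoef lam t η₁ η₂ p q k / aCoef lam t η₁ η₂ p q (k - 1) ≤ ε :=
    hr.trans hce
  have hapos := hpos (k - 1)
  calc (k : ℝ) * aCoef lam t η₁ η₂ p q k
      = (k : ℝ) * aCoef lam t η₁ η₂ p q k / aCoef lam t η₁ η₂ p q (k - 1) *
        aCoef lam t η₁ η₂ p q (k - 1) := by field_simp
    _ ≤ ε * aCoef lam t η₁ η₂ p q (k - 1) :=
        mul_le_mul_of_nonneg_right hfin hapos.le
end

section
/- Fix α < 0 and set c_{n,α} = Γ(n+1)/Γ(n−α+1) for integers n ≥ 0. Then c_{n,α} = (n+1)^{−|α|}·(1 + O(1/(n+1))) as n → ∞, and there exists a constant δ₃ > 0 such that |(n+1)^{−|α|} − c_{n,α}| ≤ δ₃·c_{n,α−1} for all n ≥ 0. -/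
open Filter Asymptotics Real Set

lemma wendel_upper (x s : ℝ) (hx : 0 < x) (hs0 : 0 ≤ s) (hs1 : s ≤ 1) :
    Gamma (x + s) ≤ x ^ s * Gamma x := by
  have hx1 : (0:ℝ) < x + 1 := by linarith
  have h := Real.convexOn_log_Gamma.2 (mem_Ioi.mpr hx) (mem_Ioi.mpr hx1)
    (by linarith : (0:ℝ) ≤ 1 - s) hs0 (by ring)
  have hco : (1 - s) • x + s • (x + 1) = x + s := by simp [smul_eq_mul]; ring
  rw [hco] at h
  simp only [Function.comp_apply, smul_eq_mul] at h
  rw [Real.Gamma_add_one hx.ne', Real.log_mul hx.ne' (Real.Gamma_pos_of_pos hx).ne'] at h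
  have h2 : Real.log (Gamma (x + s)) ≤ s * Real.log x + Real.log (Gamma x) := by linarith [h]
  have hGp : 0 < Gamma (x + s) := Real.Gamma_pos_of_pos (by linarith)
  calc Gamma (x + s) = Real.exp (Real.log (Gamma (x + s))) := (Real.exp_log hGp).symm
    _ ≤ Real.exp (s * Real.log x + Real.log (Gamma x)) := Real.exp_le_exp.mpr h2
    _ = x ^ s * Gamma x := by
        rw [Real.exp_add, Real.exp_log (Real.Gamma_pos_of_pos hx),
          Real.rpow_def_of_pos hx, mul_comm (Real.log x) s]

lemma wendel_lower (x s : ℝ) (hx : 0 < x) (hs0 : 0 ≤ s) (hs1 : s ≤ 1) :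
    x * Gamma x ≤ (x + s) ^ (1 - s) * Gamma (x + s) := by
  have hxs : (0:ℝ) < x + s := by linarith
  have hxs1 : (0:ℝ) < x + s + 1 := by linarith
  have h := Real.convexOn_log_Gamma.2 (mem_Ioi.mpr hxs) (mem_Ioi.mpr hxs1)
    hs0 (by linarith : (0:ℝ) ≤ 1 - s) (by ring)
  have hco : s • (x + s) + (1 - s) • (x + s + 1) = x + 1 := by simp [smul_eq_mul]; ring
  rw [hco] at h
  simp only [Function.comp_apply, smul_eq_mul] at h
  rw [Real.Gamma_add_one hx.ne', Real.Gamma_add_one hxs.ne',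
    Real.log_mul hx.ne' (Real.Gamma_pos_of_pos hx).ne',
    Real.log_mul hxs.ne' (Real.Gamma_pos_of_pos hxs).ne'] at h
  have h2 : Real.log x + Real.log (Gamma x) ≤
      (1 - s) * Real.log (x + s) + Real.log (Gamma (x + s)) := by nlinarith [h]
  calc x * Gamma x
      = Real.exp (Real.log x + Real.log (Gamma x)) := by
        rw [Real.exp_add, Real.exp_log hx, Real.exp_log (Real.Gamma_pos_of_pos hx)]
    _ ≤ Real.exp ((1 - s) * Real.log (x + s) + Real.log (Gamma (x + s))) :=
        Real.exp_le_exp.mpr h2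
    _ = (x + s) ^ (1 - s) * Gamma (x + s) := by
        rw [Real.exp_add, Real.exp_log (Real.Gamma_pos_of_pos hxs),
          Real.rpow_def_of_pos hxs, mul_comm (Real.log (x + s)) (1 - s)]

lemma gamma_nat_mul_ge (y x : ℝ) (hy : 0 < y) (hx : 0 < x) (hxy : x ≤ y) (m : ℕ) :
    x ^ m * Gamma y ≤ Gamma (y + m) := by
  induction m with
  | zero => simp
  | succ m ih =>
    have hym : (0:ℝ) < y + m := by positivity
    have : Gamma (y + (m + 1 : ℕ)) = (y + m) * Gamma (y + m) := by
      push_cast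
      rw [show y + (m + 1 : ℝ) = (y + m) + 1 by ring, Real.Gamma_add_one hym.ne']
    rw [this]
    have h1 : x ^ (m + 1) * Gamma y = x * (x ^ m * Gamma y) := by ring
    rw [h1]
    have hxym : x ≤ y + m := by
      have : (0:ℝ) ≤ m := Nat.cast_nonneg m
      linarith
    have h0 : 0 ≤ x ^ m * Gamma y := by positivity
    calc x * (x ^ m * Gamma y) ≤ (y + m) * (x ^ m * Gamma y) :=
          mul_le_mul_of_nonneg_right hxym h0
      _ ≤ (y + m) * Gamma (y + m) := mul_le_mul_of_nonneg_left ih hym.le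

lemma gamma_nat_mul_le (y : ℝ) (hy : 0 < y) (m : ℕ) :
    Gamma (y + m) ≤ (y + m) ^ m * Gamma y := by
  induction m with
  | zero => simp
  | succ m ih =>
    have hym : (0:ℝ) < y + m := by positivity
    have h1 : Gamma (y + (m + 1 : ℕ)) = (y + m) * Gamma (y + m) := by
      push_cast
      rw [show y + (m + 1 : ℝ) = (y + m) + 1 by ring, Real.Gamma_add_one hym.ne']
    rw [h1]
    have h2 : (y + m) * Gamma (y + m) ≤ (y + m) * ((y + m) ^ m * Gamma y) :=
      mul_le_mul_of_nonneg_left ih hym.le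
    have h3 : (y + m) * ((y + m) ^ m * Gamma y) ≤ (y + (m + 1 : ℕ)) ^ (m + 1) * Gamma y := by
      push_cast
      have hmono : (y + m) ^ (m + 1) ≤ (y + m + 1) ^ (m + 1) :=
        pow_le_pow_left₀ hym.le (by linarith) _
      have hG : 0 ≤ Gamma y := (Real.Gamma_pos_of_pos hy).le
      calc (y + m) * ((y + m) ^ m * Gamma y) = (y + m) ^ (m + 1) * Gamma y := by ring
        _ ≤ (y + m + 1) ^ (m + 1) * Gamma y := mul_le_mul_of_nonneg_right hmono hG
        _ = (y + (m + 1 : ℝ)) ^ (m + 1) * Gamma y := by ring_nf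
    exact h2.trans h3

lemma ratio_bounds (x s : ℝ) (m : ℕ) (hx : 1 ≤ x) (hs0 : 0 ≤ s) (hs1 : s ≤ 1) :
    Gamma x / Gamma (x + (s + m)) ≤ x ^ (-(s + (m:ℝ))) * (1 + s / x) ∧
    x ^ (-s) * ((x + (s + m)) ^ m)⁻¹ ≤ Gamma x / Gamma (x + (s + m)) := by
  have hx0 : (0:ℝ) < x := by linarith
  have hm0 : (0:ℝ) ≤ m := Nat.cast_nonneg m
  have hxs : (0:ℝ) < x + s := by linarith
  have hxβ : (0:ℝ) < x + (s + m) := by linarith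
  have hA : 0 < Gamma x := Real.Gamma_pos_of_pos hx0
  have hB : 0 < Gamma (x + (s + m)) := Real.Gamma_pos_of_pos hxβ
  have hC : 0 < Gamma (x + s) := Real.Gamma_pos_of_pos hxs
  have hsm : x + (s + m) = (x + s) + m := by ring
  constructor
  · -- upper bound
    have h1 : x ^ m * Gamma (x + s) ≤ Gamma ((x + s) + m) :=
      gamma_nat_mul_ge (x + s) x hxs hx0 (by linarith) m
    have h2 : x * Gamma x ≤ (x + s) ^ (1 - s) * Gamma (x + s) :=
      wendel_lower x s hx0 hs0 hs1
    have h3 : x ^ (m + 1) * Gamma x ≤ (x + s) ^ (1 - s) * Gamma (x + (s + m)) := by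
      rw [hsm]
      calc x ^ (m + 1) * Gamma x = x ^ m * (x * Gamma x) := by ring
        _ ≤ x ^ m * ((x + s) ^ (1 - s) * Gamma (x + s)) :=
            mul_le_mul_of_nonneg_left h2 (by positivity)
        _ = (x + s) ^ (1 - s) * (x ^ m * Gamma (x + s)) := by ring
        _ ≤ (x + s) ^ (1 - s) * Gamma ((x + s) + m) :=
            mul_le_mul_of_nonneg_left h1 (by positivity)
    have h4 : Gamma x / Gamma (x + (s + m)) ≤ (x + s) ^ (1 - s) / x ^ (m + 1) := by
      rw [div_le_div_iff₀ hB (by positivity)]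
      nlinarith [h3]
    refine h4.trans ?_
    -- (x+s)^(1-s) ≤ x^(1-s) * (1 + s/x)
    have hb1 : (1:ℝ) ≤ 1 + s / x := by
      have := div_nonneg hs0 hx0.le; linarith
    have h5 : (x + s) ^ (1 - s) ≤ x ^ ((1:ℝ) - s) * (1 + s / x) := by
      have hxe : x + s = x * (1 + s / x) := by field_simp
      rw [hxe, Real.mul_rpow hx0.le (by positivity)]
      refine mul_le_mul_of_nonneg_left ?_ (by positivity)
      calc (1 + s / x) ^ (1 - s) ≤ (1 + s / x) ^ (1:ℝ) :=
            Real.rpow_le_rpow_of_exponent_le hb1 (by linarith)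
        _ = 1 + s / x := Real.rpow_one _
    have h6 : x ^ ((1:ℝ) - s) / x ^ (m + 1) = x ^ (-(s + (m:ℝ))) := by
      rw [← Real.rpow_natCast x (m + 1), ← Real.rpow_sub hx0]
      congr 1
      push_cast; ring
    calc (x + s) ^ (1 - s) / x ^ (m + 1)
        ≤ x ^ ((1:ℝ) - s) * (1 + s / x) / x ^ (m + 1) :=
          div_le_div_of_nonneg_right h5 (by positivity)
      _ = x ^ ((1:ℝ) - s) / x ^ (m + 1) * (1 + s / x) := by ring
      _ = x ^ (-(s + (m:ℝ))) * (1 + s / x) := by rw [h6]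
  · -- lower bound
    have h1 : Gamma ((x + s) + m) ≤ ((x + s) + m) ^ m * Gamma (x + s) :=
      gamma_nat_mul_le (x + s) hxs m
    have h2 : Gamma (x + s) ≤ x ^ s * Gamma x := wendel_upper x s hx0 hs0 hs1
    have h3 : Gamma (x + (s + m)) ≤ (x + (s + m)) ^ m * (x ^ s * Gamma x) := by
      rw [hsm]
      exact h1.trans (mul_le_mul_of_nonneg_left h2 (by positivity))
    rw [le_div_iff₀ hB]
    have hxs_pos : (0:ℝ) < x ^ s := Real.rpow_pos_of_pos hx0 s
    have hxns : x ^ (-s) = (x ^ s)⁻¹ := Real.rpow_neg hx0.le s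
    rw [hxns]
    have hp : (0:ℝ) < (x + (s + m)) ^ m := by positivity
    calc (x ^ s)⁻¹ * ((x + (s + m)) ^ m)⁻¹ * Gamma (x + (s + m))
        ≤ (x ^ s)⁻¹ * ((x + (s + m)) ^ m)⁻¹ * ((x + (s + m)) ^ m * (x ^ s * Gamma x)) :=
          mul_le_mul_of_nonneg_left h3 (by positivity)
      _ = Gamma x * (((x + (s + m)) ^ m)⁻¹ * (x + (s + m)) ^ m) * ((x ^ s)⁻¹ * x ^ s) := by
          ring
      _ = Gamma x := by rw [inv_mul_cancel₀ hp.ne', inv_mul_cancel₀ hxs_pos.ne']; ring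

lemma main_bounds (β : ℝ) (hβ : 0 < β) (x : ℝ) (hx : 1 ≤ x) :
    |x ^ (-β) - Gamma x / Gamma (x + β)| ≤ β * (β + 1) * (x ^ (-β) / x) ∧
    x ^ (-β) / x ≤ (1 + β) ^ (⌊β⌋₊ + 1) * (Gamma x / Gamma (x + β) / (x + β)) := by
  have hx0 : (0:ℝ) < x := by linarith
  set m := ⌊β⌋₊ with hm
  have hmβ : (m:ℝ) ≤ β := Nat.floor_le hβ.le
  have hβm1 : β < m + 1 := Nat.lt_floor_add_one β
  set s := β - m with hs
  have hs0 : 0 ≤ s := by rw [hs]; linarith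
  have hs1 : s ≤ 1 := by rw [hs]; linarith
  have hsβ : s ≤ β := by rw [hs]; have : (0:ℝ) ≤ m := Nat.cast_nonneg m; linarith
  have hsm : s + (m:ℝ) = β := by rw [hs]; ring
  obtain ⟨hub, hlb⟩ := ratio_bounds x s m hx hs0 hs1
  rw [hsm] at hub hlb
  have hxβ : (0:ℝ) < x + β := by linarith
  set u := x ^ (-β) with hud
  set c := Gamma x / Gamma (x + β) with hcd
  have hu_pos : 0 < u := Real.rpow_pos_of_pos hx0 _
  have hc_pos : 0 < c :=
    div_pos (Real.Gamma_pos_of_pos hx0) (Real.Gamma_pos_of_pos hxβ)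
  have hxm_pos : (0:ℝ) < x ^ m := by positivity
  have hu_eq : x ^ (-s) * ((x ^ m : ℝ))⁻¹ = u := by
    rw [← Real.rpow_natCast x m, ← Real.rpow_neg hx0.le, ← Real.rpow_add hx0, hud]
    congr 1
    rw [hs]; ring
  have hxs_eq : x ^ (-s) = u * x ^ m := by
    rw [← hu_eq]; field_simp
  -- Bernoulli
  have hber : 1 - (m:ℝ) * β / x ≤ x ^ m / (x + β) ^ m := by
    have h0 : (-2:ℝ) ≤ -β / (x + β) := by
      have h1 : β / (x + β) ≤ 1 := by rw [div_le_one hxβ]; linarith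
      have h2 : 0 ≤ β / (x + β) := by positivity
      rw [neg_div]; linarith
    have h1 := one_add_mul_le_pow h0 m
    have he : 1 + -β / (x + β) = x / (x + β) := by field_simp; ring
    rw [he, div_pow] at h1
    refine le_trans ?_ h1
    have hdd : β / (x + β) ≤ β / x := by
      apply div_le_div_of_nonneg_left hβ.le hx0; linarith
    have hm0 : (0:ℝ) ≤ m := Nat.cast_nonneg m
    have := mul_le_mul_of_nonneg_left hdd hm0
    have e1 : (m:ℝ) * β / x = (m:ℝ) * (β / x) := by ring
    have e2 : (m:ℝ) * (-β / (x + β)) = -((m:ℝ) * (β / (x + β))) := by ring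
    linarith [this]
  have hlb' : u * (x ^ m / (x + β) ^ m) ≤ c := by
    refine le_trans (le_of_eq ?_) hlb
    rw [hxs_eq]; ring
  have hdev1 : c - u ≤ β * (β + 1) * (u / x) := by
    have hub' : c ≤ u + u / x * s := by
      refine hub.trans (le_of_eq ?_); ring
    have key : s ≤ β * (β + 1) := by nlinarith
    have hux : (0:ℝ) ≤ u / x := by positivity
    have := mul_le_mul_of_nonneg_left key hux
    have e : β * (β + 1) * (u / x) = u / x * (β * (β + 1)) := by ring
    linarith [this]
  have hdev2 : u - c ≤ β * (β + 1) * (u / x) := by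
    have e1 : u * (1 - x ^ m / (x + β) ^ m) ≤ u * ((m:ℝ) * β / x) :=
      mul_le_mul_of_nonneg_left (by linarith [hber]) hu_pos.le
    have e2 : u * ((m:ℝ) * β / x) ≤ β * (β + 1) * (u / x) := by
      have hmb : (m:ℝ) * β ≤ β * (β + 1) := by nlinarith
      calc u * ((m:ℝ) * β / x) = u / x * ((m:ℝ) * β) := by ring
        _ ≤ u / x * (β * (β + 1)) :=
            mul_le_mul_of_nonneg_left hmb (by positivity)
        _ = β * (β + 1) * (u / x) := by ring
    have e0 : u - u * (x ^ m / (x + β) ^ m) = u * (1 - x ^ m / (x + β) ^ m) := by ring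
    linarith [hlb', e1, e2]
  constructor
  · rw [abs_sub_le_iff]; exact ⟨hdev2, hdev1⟩
  · have h5 : (x + β) ^ (m + 1) ≤ (x * (1 + β)) ^ (m + 1) := by
      apply pow_le_pow_left₀ hxβ.le; nlinarith
    have key2 : u / x = u * ((x + β) ^ (m + 1)) / (x * (x + β) ^ (m + 1)) := by
      rw [mul_div_mul_right _ _ (by positivity : ((x + β) ^ (m + 1) : ℝ) ≠ 0)]
    have key3 : (1 + β) ^ (m + 1) * (u * (x ^ m / (x + β) ^ m) / (x + β)) =
        u * ((x * (1 + β)) ^ (m + 1)) / (x * (x + β) ^ (m + 1)) := by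
      rw [mul_pow]
      field_simp
      ring
    calc u / x = u * ((x + β) ^ (m + 1)) / (x * (x + β) ^ (m + 1)) := key2
      _ ≤ u * ((x * (1 + β)) ^ (m + 1)) / (x * (x + β) ^ (m + 1)) := by gcongr
      _ = (1 + β) ^ (m + 1) * (u * (x ^ m / (x + β) ^ m) / (x + β)) := key3.symm
      _ ≤ (1 + β) ^ (m + 1) * (c / (x + β)) := by gcongr

/-- asymptotics of the Gamma-function ratios `c_{n,α}`.
Fix `α < 0` and set `c_{n,α} = Γ(n+1)/Γ(n−α+1)`.  Then
`c_{n,α} = (n+1)^{−|α|} (1 + O(1/(n+1)))` as `n → ∞`, and there exists `δ₃ > 0`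
with `|(n+1)^{−|α|} − c_{n,α}| ≤ δ₃ c_{n,α−1}` for all `n ≥ 0`. -/
theorem gamma_ratio_asymptotics (α : ℝ) (hα : α < 0) :
    ((fun n : ℕ =>
        Real.Gamma ((n : ℝ) + 1) / Real.Gamma ((n : ℝ) - α + 1) -
          ((n : ℝ) + 1) ^ (-|α|))
      =O[atTop] fun n : ℕ => ((n : ℝ) + 1) ^ (-|α|) / ((n : ℝ) + 1)) ∧
    ∃ δ₃ : ℝ, 0 < δ₃ ∧ ∀ n : ℕ,
      |((n : ℝ) + 1) ^ (-|α|) -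
          Real.Gamma ((n : ℝ) + 1) / Real.Gamma ((n : ℝ) - α + 1)| ≤
        δ₃ * (Real.Gamma ((n : ℝ) + 1) / Real.Gamma ((n : ℝ) - (α - 1) + 1)) := by
  have hβ : (0:ℝ) < -α := by linarith
  have habs : |α| = -α := abs_of_neg hα
  have hx1 : ∀ n : ℕ, (1:ℝ) ≤ (n:ℝ) + 1 := by
    intro n; have : (0:ℝ) ≤ n := Nat.cast_nonneg n; linarith
  have harg : ∀ n : ℕ, (n:ℝ) - α + 1 = ((n:ℝ) + 1) + (-α) := by intro n; ring
  constructor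
  · apply IsBigO.of_bound ((-α) * (-α + 1))
    filter_upwards with n
    have h := (main_bounds (-α) hβ ((n:ℝ) + 1) (hx1 n)).1
    rw [Real.norm_eq_abs, Real.norm_eq_abs, habs, harg n, abs_sub_comm]
    have hpos : (0:ℝ) < ((n:ℝ) + 1) ^ (-(-α)) / ((n:ℝ) + 1) := by
      have := Real.rpow_pos_of_pos (show (0:ℝ) < (n:ℝ)+1 by linarith [hx1 n]) (-(-α))
      positivity
    rw [abs_of_pos hpos]
    exact h
  · refine ⟨(-α) * (-α + 1) * (1 + -α) ^ (⌊-α⌋₊ + 1), by positivity, fun n => ?_⟩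
    have h1 := (main_bounds (-α) hβ ((n:ℝ) + 1) (hx1 n)).1
    have h2 := (main_bounds (-α) hβ ((n:ℝ) + 1) (hx1 n)).2
    have hxβ : (0:ℝ) < ((n:ℝ) + 1) + (-α) := by linarith [hx1 n]
    have harg2 : (n:ℝ) - (α - 1) + 1 = (((n:ℝ) + 1) + (-α)) + 1 := by ring
    rw [habs, harg n, harg2, Real.Gamma_add_one hxβ.ne']
    have hG : Real.Gamma ((n:ℝ) + 1) /
        ((((n:ℝ) + 1) + (-α)) * Real.Gamma (((n:ℝ) + 1) + (-α))) =
        Real.Gamma ((n:ℝ) + 1) / Real.Gamma (((n:ℝ) + 1) + (-α)) / (((n:ℝ) + 1) + (-α)) := by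
      rw [div_div, mul_comm]
    rw [hG]
    calc |((n:ℝ) + 1) ^ (-(-α)) -
          Real.Gamma ((n:ℝ) + 1) / Real.Gamma (((n:ℝ) + 1) + (-α))|
        ≤ (-α) * (-α + 1) * (((n:ℝ) + 1) ^ (-(-α)) / ((n:ℝ) + 1)) := h1
      _ ≤ (-α) * (-α + 1) * ((1 + -α) ^ (⌊-α⌋₊ + 1) *
          (Real.Gamma ((n:ℝ) + 1) / Real.Gamma (((n:ℝ) + 1) + (-α)) / (((n:ℝ) + 1) + (-α)))) := by
          apply mul_le_mul_of_nonneg_left h2 (by positivity)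
      _ = (-α) * (-α + 1) * (1 + -α) ^ (⌊-α⌋₊ + 1) *
          (Real.Gamma ((n:ℝ) + 1) / Real.Gamma (((n:ℝ) + 1) + (-α)) / (((n:ℝ) + 1) + (-α))) := by
          ring
end

section
/- Let t > 0, λ > 0, η₁ > 1, η₂ > 0, and p, q > 0 with p + q = 1, and set s = 2√π·C₁ and r = 2√B₁ with C₁ = (η₁λtp/(2π))·exp{η₂λtq/(η₁+η₂) − λt} and B₁ = η₁λtp. Define d̃_k = s·r^{2k}/(2k)!. Then there exists a constant δ₄ > 0 such that |a_k − c_{k,−3/2}·d̃_k| ≤ δ₄·c_{k,−5/2}·d̃_k for all k ≥ 0, where c_{n,α} = Γ(n+1)/Γ(n−α+1). -/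
open Filter Asymptotics MeasureTheory

/-- `c_{n,α} = Γ(n+1)/Γ(n−α+1)` for `α < 0`. -/
noncomputable def gammaRatio (α : ℝ) (n : ℕ) : ℝ :=
  Real.Gamma ((n : ℝ) + 1) / Real.Gamma ((n : ℝ) - α + 1)

/-- `d̃_k = s r^{2k}/(2k)!`. -/
noncomputable def dTilde (s r : ℝ) (k : ℕ) : ℝ :=
  s * r ^ (2 * k) / ((2 * k).factorial : ℝ)


/-! ### Auxiliary lemmas -/

lemma kou_gammaNatHalf (n : ℕ) :
    Real.Gamma ((n : ℝ) + 1/2) = Real.sqrt Real.pi * ((2*n).factorial : ℝ) / (4 ^ n * (n.factorial : ℝ)) := by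
  induction n with
  | zero => rw [show ((0:ℕ):ℝ) + 1/2 = 1/2 by norm_num, Real.Gamma_one_half_eq]; simp
  | succ n ih =>
    have hne : ((n : ℝ) + 1/2) ≠ 0 := by positivity
    have h1 : ((n : ℝ) + 1) + 1/2 = ((n : ℝ) + 1/2) + 1 := by ring
    rw [Nat.cast_succ, h1, Real.Gamma_add_one hne, ih]
    have h2 : (2 * (n+1)) = (2*n+1) + 1 := by ring
    rw [h2, Nat.factorial_succ, Nat.factorial_succ, Nat.factorial_succ]
    have hf : (0:ℝ) < (n.factorial : ℝ) := by exact_mod_cast n.factorial_pos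
    push_cast
    field_simp
    ring

noncomputable def kouCBin (K : ℕ) : ℝ :=
  ((4:ℝ)^K * (K.factorial:ℝ)^2 / ((2*K).factorial:ℝ))^2

lemma kouCBin_pos (K : ℕ) : 0 < kouCBin K := by
  have h1 : (0:ℝ) < (K.factorial:ℝ) := by exact_mod_cast K.factorial_pos
  have h2 : (0:ℝ) < ((2*K).factorial:ℝ) := by exact_mod_cast (2*K).factorial_pos
  unfold kouCBin; positivity

lemma kouCBin_succ (K : ℕ) : kouCBin (K+1) = kouCBin K * ((2*(K:ℝ)+2)/(2*K+1))^2 := by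
  unfold kouCBin
  have h2 : (2 * (K+1)) = (2*K+1) + 1 := by ring
  rw [h2, Nat.factorial_succ, Nat.factorial_succ, Nat.factorial_succ]
  have h1 : (0:ℝ) < (K.factorial:ℝ) := by exact_mod_cast K.factorial_pos
  have h2 : (0:ℝ) < ((2*K).factorial:ℝ) := by exact_mod_cast (2*K).factorial_pos
  push_cast
  have h3 : (2*(K:ℝ)+1) ≠ 0 := by positivity
  field_simp
  ring

noncomputable def kouWProd (K : ℕ) : ℝ :=
  ∏ i ∈ Finset.range K, ((2 : ℝ) * i + 2) / (2 * i + 1) * ((2 * i + 2) / (2 * i + 3))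

lemma kouWProd_succ (K : ℕ) :
    kouWProd (K+1) = kouWProd K * (((2:ℝ)*K+2)/(2*K+1) * ((2*K+2)/(2*K+3))) := by
  rw [kouWProd, Finset.prod_range_succ]; rfl

lemma kouWProd_nonneg (K : ℕ) : 0 ≤ kouWProd K := by
  apply Finset.prod_nonneg; intro i _; positivity

lemma kouWProd_tendsto : Tendsto kouWProd atTop (nhds (Real.pi/2)) :=
  Real.tendsto_prod_pi_div_two

lemma kouWProd_eq (K : ℕ) : kouWProd K = kouCBin K / (2*K+1) := by
  induction K with
  | zero => simp [kouWProd, kouCBin]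
  | succ K ih =>
    rw [kouWProd_succ, ih, kouCBin_succ]
    have h3 : (2*(K:ℝ)+1) ≠ 0 := by positivity
    have h4 : (2*(K:ℝ)+3) ≠ 0 := by positivity
    push_cast
    field_simp
    ring

lemma kouCBin_upper (K : ℕ) : kouCBin K ≤ Real.pi * (K + 1/2) := by
  have hmono : Monotone kouWProd := by
    apply monotone_nat_of_le_succ
    intro n
    rw [kouWProd_succ]
    nth_rewrite 1 [← mul_one (kouWProd n)]
    apply mul_le_mul_of_nonneg_left _ (kouWProd_nonneg n)
    rw [div_mul_div_comm, le_div_iff₀ (by positivity)]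
    nlinarith [sq_nonneg ((n:ℝ))]
  have := hmono.ge_of_tendsto kouWProd_tendsto K
  rw [kouWProd_eq, div_le_iff₀ (by positivity)] at this
  calc kouCBin K ≤ Real.pi / 2 * (2*K+1) := this
    _ = Real.pi * (K + 1/2) := by ring

lemma kouCBin_lower (K : ℕ) : Real.pi * K ≤ kouCBin K := by
  cases K with
  | zero => simp [Real.pi_pos.le, kouCBin]
  | succ K =>
    set V : ℕ → ℝ := fun n => kouWProd (n+1) * ((2*n+3) / (n+1)) with hV
    have hVstep : ∀ n : ℕ, V (n+1) = kouWProd (n+1) * ((4*((n:ℝ)+2))/(2*n+3)) := by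
      intro n
      simp only [hV]
      rw [kouWProd_succ]
      push_cast
      have h1 : (2*(n:ℝ)+3) ≠ 0 := by positivity
      have h2 : (2*(n:ℝ)+5) ≠ 0 := by positivity
      have h3 : ((n:ℝ)+2) ≠ 0 := by positivity
      field_simp
      ring
    have hanti : Antitone V := by
      apply antitone_nat_of_succ_le
      intro n
      rw [hVstep n]
      simp only [hV]
      apply mul_le_mul_of_nonneg_left _ (kouWProd_nonneg (n+1))
      rw [div_le_div_iff₀ (by positivity) (by positivity)]
      push_cast
      nlinarith [sq_nonneg ((n:ℝ))]
    have htend : Tendsto V atTop (nhds Real.pi) := by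
      have h1 : Tendsto (fun n : ℕ => kouWProd (n+1)) atTop (nhds (Real.pi/2)) :=
        kouWProd_tendsto.comp (tendsto_add_atTop_nat 1)
      have h2 : Tendsto (fun n : ℕ => (2*(n:ℝ)+3) / ((n:ℝ)+1)) atTop (nhds 2) := by
        have h3 : ∀ n : ℕ, (2*(n:ℝ)+3) / ((n:ℝ)+1) = 2 + 1/((n:ℝ)+1) := by
          intro n
          have : ((n:ℝ)+1) ≠ 0 := by positivity
          field_simp; ring
        simp only [h3]
        have h4 := tendsto_one_div_add_atTop_nhds_zero_nat.const_add (2:ℝ)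
        simpa using h4
      have h5 := h1.mul h2
      have h6 : Real.pi / 2 * 2 = Real.pi := by ring
      rw [h6] at h5
      exact h5
    have hle := hanti.le_of_tendsto htend K
    simp only [hV] at hle
    rw [kouWProd_eq] at hle
    push_cast at hle ⊢
    rw [div_mul_div_comm, le_div_iff₀ (by positivity)] at hle
    have h7 : (0:ℝ) < (K:ℝ) + 1 := by positivity
    nlinarith [hle]

noncomputable def kouGRat (k : ℕ) : ℝ :=
  16^(k+1) * (k.factorial:ℝ)^2 * ((k+1).factorial:ℝ) * ((k+2).factorial:ℝ) /
    (Real.pi * ((2*k).factorial:ℝ) * ((2*k+4).factorial:ℝ))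

lemma kouGRat_eq (k : ℕ) :
    kouGRat k = kouCBin (k+1) * ((2*(k:ℝ)+1)/(Real.pi * ((k:ℝ)+1) * (2*(k:ℝ)+3))) := by
  unfold kouGRat kouCBin
  have h16 : (16:ℝ)^(k+1) = 4^(2*k) * 16 := by
    rw [pow_succ]
    congr 1
    rw [show (16:ℝ) = 4^2 by norm_num, ← pow_mul, mul_comm]
  rw [h16]
  have e1 : 2*(k+1) = (2*k+1)+1 := by ring
  have e2 : 2*k+4 = (((2*k+1)+1)+1)+1 := by ring
  rw [e1, e2]
  simp only [Nat.factorial_succ]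
  have h1 : (0:ℝ) < (k.factorial:ℝ) := by exact_mod_cast k.factorial_pos
  have h2 : (0:ℝ) < ((2*k).factorial:ℝ) := by exact_mod_cast (2*k).factorial_pos
  have h3 : (0:ℝ) < Real.pi := Real.pi_pos
  push_cast
  field_simp
  ring

lemma kouGRat_lower (k : ℕ) : (2*(k:ℝ)+1)/(2*(k:ℝ)+3) ≤ kouGRat k := by
  rw [kouGRat_eq, mul_div_assoc']
  have h := kouCBin_lower (k+1)
  push_cast at h
  have h3 : (0:ℝ) < Real.pi := Real.pi_pos
  rw [div_le_div_iff₀ (by positivity) (by positivity)]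
  nlinarith [mul_le_mul_of_nonneg_right h (by positivity : (0:ℝ) ≤ (2*(k:ℝ)+1)*(2*(k:ℝ)+3))]

lemma kouGRat_upper (k : ℕ) : kouGRat k ≤ (2*(k:ℝ)+1)/(2*(k:ℝ)+2) := by
  rw [kouGRat_eq, mul_div_assoc']
  have h := kouCBin_upper (k+1)
  push_cast at h
  have h3 : (0:ℝ) < Real.pi := Real.pi_pos
  rw [div_le_div_iff₀ (by positivity) (by positivity)]
  nlinarith [mul_le_mul_of_nonneg_right h (by positivity : (0:ℝ) ≤ (2*(k:ℝ)+1)*(2*(k:ℝ)+2))]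

lemma kou_choose_le_two_pow (m j : ℕ) : m.choose j ≤ 2 ^ m := by
  rcases le_or_gt j m with h | h
  · calc m.choose j ≤ ∑ i ∈ Finset.range (m+1), m.choose i :=
        Finset.single_le_sum (fun i _ => Nat.zero_le _) (Finset.mem_range.2 (by omega))
      _ = 2 ^ m := Nat.sum_range_choose m
  · rw [Nat.choose_eq_zero_of_lt h]; exact Nat.zero_le _

lemma kou_binom_sum_le (A Bb : ℝ) (hA : 0 ≤ A) (hB : 0 ≤ Bb) (m : ℕ) :
    ∑ r ∈ Finset.range m, A^r * Bb^(m-r) / ((r.factorial : ℝ) * ((m-r).factorial : ℝ))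
      ≤ (A+Bb)^m / (m.factorial : ℝ) := by
  have h1 : ∀ r ∈ Finset.range (m+1),
      A^r * Bb^(m-r) / ((r.factorial : ℝ) * ((m-r).factorial : ℝ))
        = A^r * Bb^(m-r) * (m.choose r : ℝ) / (m.factorial : ℝ) := by
    intro r hr
    rw [Finset.mem_range] at hr
    rw [Nat.cast_choose ℝ (by omega : r ≤ m)]
    have hf1 : (0:ℝ) < ((r).factorial : ℝ) := by exact_mod_cast (r).factorial_pos
    have hf2 : (0:ℝ) < ((m-r).factorial : ℝ) := by exact_mod_cast (m-r).factorial_pos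
    have hf3 : (0:ℝ) < ((m).factorial : ℝ) := by exact_mod_cast (m).factorial_pos
    field_simp
  calc ∑ r ∈ Finset.range m, A^r * Bb^(m-r) / ((r.factorial : ℝ) * ((m-r).factorial : ℝ))
      ≤ ∑ r ∈ Finset.range (m+1), A^r * Bb^(m-r) / ((r.factorial : ℝ) * ((m-r).factorial : ℝ)) := by
        apply Finset.sum_le_sum_of_subset_of_nonneg
        · exact Finset.range_subset_range.2 (by omega)
        · intro i _ _
          have hf1 : (0:ℝ) < ((i).factorial : ℝ) := by exact_mod_cast (i).factorial_pos
          have hf2 : (0:ℝ) < ((m-i).factorial : ℝ) := by exact_mod_cast (m-i).factorial_pos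
          positivity
    _ = (∑ r ∈ Finset.range (m+1), A^r * Bb^(m-r) * (m.choose r : ℝ)) / (m.factorial : ℝ) := by
        rw [Finset.sum_div]
        exact Finset.sum_congr rfl h1
    _ = (A+Bb)^m / (m.factorial : ℝ) := by rw [add_pow]

section KouSeries

variable {lam t η₁ η₂ p q : ℝ}
  (hlam : 0 < lam) (ht : 0 < t) (hη₁ : 0 < η₁) (hη₂ : 0 < η₂) (hp : 0 < p) (hq : 0 < q)

include hlam ht hη₁ hη₂ hp hq

lemma kou_sm_zero (K : ℕ) :
    poisCoef lam t K * Pcoef η₁ η₂ p q K K =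
      Real.exp (-(lam*t)) * (lam*t*p)^K / ((K.factorial : ℝ)) := by
  rw [Pcoef, if_pos rfl, poisCoef, mul_pow, mul_pow]
  ring

lemma kou_sm_lower (K m : ℕ) :
    Real.exp (-(lam*t)) * (lam*t*p)^K * (lam*t*(η₂/(η₁+η₂))*q)^m /
        ((K.factorial : ℝ) * (m.factorial : ℝ))
      ≤ poisCoef lam t (m+K) * Pcoef η₁ η₂ p q (m+K) K := by
  have hσ : (0:ℝ) < η₂/(η₁+η₂) := by positivity
  have hρ : (0:ℝ) < η₁/(η₁+η₂) := by positivity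
  rcases Nat.eq_zero_or_pos m with hm | hm
  · subst hm
    rw [zero_add, kou_sm_zero hlam ht hη₁ hη₂ hp hq]
    simp
  · have hKne : K ≠ m + K := by omega
    rw [Pcoef, if_neg hKne]
    have hmem : K ∈ Finset.Ico K (m+K) := by
      simp [Finset.mem_Ico]; omega
    have hsingle :
        ((m+K - K - 1).choose (K - K) : ℝ) * ((m+K).choose K : ℝ) *
            (η₁ / (η₁ + η₂)) ^ (K - K) * (η₂ / (η₁ + η₂)) ^ (m+K - K) * p ^ K * q ^ (m+K - K)
          ≤ ∑ i ∈ Finset.Ico K (m+K),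
            ((m+K - K - 1).choose (i - K) : ℝ) * ((m+K).choose i : ℝ) *
              (η₁ / (η₁ + η₂)) ^ (i - K) * (η₂ / (η₁ + η₂)) ^ (m+K - i) * p ^ i * q ^ (m+K - i) := by
      apply Finset.single_le_sum (f := fun i => ((m+K - K - 1).choose (i - K) : ℝ) * ((m+K).choose i : ℝ) *
              (η₁ / (η₁ + η₂)) ^ (i - K) * (η₂ / (η₁ + η₂)) ^ (m+K - i) * p ^ i * q ^ (m+K - i)) _ hmem
      intro i _
      positivity
    have hπ : 0 ≤ poisCoef lam t (m+K) := by
      rw [poisCoef]; positivity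
    calc Real.exp (-(lam*t)) * (lam*t*p)^K * (lam*t*(η₂/(η₁+η₂))*q)^m /
        ((K.factorial : ℝ) * (m.factorial : ℝ))
        = poisCoef lam t (m+K) *
          (((m+K - K - 1).choose (K - K) : ℝ) * ((m+K).choose K : ℝ) *
            (η₁ / (η₁ + η₂)) ^ (K - K) * (η₂ / (η₁ + η₂)) ^ (m+K - K) * p ^ K * q ^ (m+K - K)) := by
          rw [poisCoef]
          have e1 : K - K = 0 := by omega
          have e2 : m + K - K = m := by omega
          rw [e1, e2, Nat.choose_zero_right]
          rw [Nat.cast_choose ℝ (by omega : K ≤ m + K), e2]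
          have hf1 : (0:ℝ) < (K.factorial : ℝ) := by exact_mod_cast K.factorial_pos
          have hf2 : (0:ℝ) < (m.factorial : ℝ) := by exact_mod_cast m.factorial_pos
          have hf3 : (0:ℝ) < ((m+K).factorial : ℝ) := by exact_mod_cast (m+K).factorial_pos
          rw [mul_pow, mul_pow, mul_pow, mul_pow, pow_add]
          field_simp
          ring
      _ ≤ _ := by
          apply mul_le_mul_of_nonneg_left hsingle hπ

lemma kou_sm_upper (K m : ℕ) :
    poisCoef lam t (m+1+K) * Pcoef η₁ η₂ p q (m+1+K) K
      ≤ Real.exp (-(lam*t)) * (lam*t*p)^K * (lam*t*(η₂/(η₁+η₂))*q)^(m+1) /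
          ((K.factorial : ℝ) * ((m+1).factorial : ℝ))
        + Real.exp (-(lam*t)) * (lam*t*p)^K / (((K+1).factorial : ℝ))
          * ((2*(lam*t)*p*(η₁/(η₁+η₂))) *
             (2*(lam*t)*p*(η₁/(η₁+η₂)) + 2*(lam*t)*(η₂/(η₁+η₂))*q)^m / (m.factorial : ℝ)) := by
  set c := lam*t with hc
  have hc0 : 0 < c := by positivity
  set ρ := η₁/(η₁+η₂) with hρdef
  set σ := η₂/(η₁+η₂) with hσdef
  have hρ : (0:ℝ) < ρ := by positivity
  have hσ : (0:ℝ) < σ := by positivity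
  have hηsum : (0:ℝ) < η₁ + η₂ := by positivity
  have hηs : η₁ + η₂ ≠ 0 := ne_of_gt hηsum
  have hηs2 : η₂ + η₁ ≠ 0 := by positivity
  have hKne : K ≠ m+1+K := by omega
  rw [Pcoef, if_neg hKne]
  rw [Finset.sum_eq_sum_Ico_succ_bot (by omega : K < m+1+K)]
  rw [mul_add]
  have hπ : 0 ≤ poisCoef lam t (m+1+K) := by rw [poisCoef]; positivity
  apply add_le_add
  · apply le_of_eq
    rw [hσdef, poisCoef]
    have e1 : K - K = 0 := by omega
    have e2 : m + 1 + K - K = m + 1 := by omega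
    have e4 : m+1+K - K - 1 = m := by omega
    rw [e4, e1, e2, Nat.choose_zero_right]
    rw [Nat.cast_choose ℝ (by omega : K ≤ m+1+K), e2]
    have hf1 : (0:ℝ) < (K.factorial : ℝ) := by exact_mod_cast K.factorial_pos
    have hf2 : (0:ℝ) < ((m+1).factorial : ℝ) := by exact_mod_cast (m+1).factorial_pos
    have hf3 : (0:ℝ) < ((m+1+K).factorial : ℝ) := by exact_mod_cast (m+1+K).factorial_pos
    rw [mul_pow, mul_pow, mul_pow, mul_pow, pow_add]
    simp only [div_pow]
    field_simp
    rw [hc]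
    field_simp
    rw [div_pow]
    field_simp
    ring
  · rw [Finset.sum_Ico_eq_sum_range]
    have e3 : m + 1 + K - (K+1) = m := by omega
    rw [e3, Finset.mul_sum]
    set A := 2*c*p*ρ with hA
    set Bb := 2*c*σ*q with hB
    have hA0 : 0 < A := by positivity
    have hB0 : 0 < Bb := by positivity
    calc ∑ r ∈ Finset.range m, poisCoef lam t (m+1+K) *
          (((m+1+K - K - 1).choose (K+1+r - K) : ℝ) * ((m+1+K).choose (K+1+r) : ℝ) *
            ρ ^ (K+1+r - K) * σ ^ (m+1+K - (K+1+r)) * p ^ (K+1+r) * q ^ (m+1+K - (K+1+r)))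
        ≤ ∑ r ∈ Finset.range m, Real.exp (-c) * (c*p)^K / (((K+1).factorial : ℝ))
            * A * (A^r * Bb^(m-r) / ((r.factorial : ℝ) * ((m-r).factorial : ℝ))) := by
          apply Finset.sum_le_sum
          intro r hr
          rw [Finset.mem_range] at hr
          have e4 : m+1+K - K - 1 = m := by omega
          have e5 : K+1+r - K = r+1 := by omega
          have e6 : m+1+K - (K+1+r) = m - r := by omega
          rw [e4, e5, e6, poisCoef]
          rw [Nat.cast_choose ℝ (by omega : K+1+r ≤ m+1+K), e6]
          have hf1 : (0:ℝ) < ((K+1+r).factorial : ℝ) := by exact_mod_cast (K+1+r).factorial_pos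
          have hf2 : (0:ℝ) < ((m-r).factorial : ℝ) := by exact_mod_cast (m-r).factorial_pos
          have hf3 : (0:ℝ) < ((m+1+K).factorial : ℝ) := by exact_mod_cast (m+1+K).factorial_pos
          have hf4 : (0:ℝ) < ((K+1).factorial : ℝ) := by exact_mod_cast (K+1).factorial_pos
          have hf5 : (0:ℝ) < ((r).factorial : ℝ) := by exact_mod_cast (r).factorial_pos
          have hNat : (m.choose (r+1)) * ((K+1).factorial * r.factorial)
              ≤ 2^(m+1) * (K+1+r).factorial := by
            apply Nat.mul_le_mul
            · calc m.choose (r+1) ≤ 2^m := kou_choose_le_two_pow m (r+1)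
                _ ≤ 2^(m+1) := Nat.pow_le_pow_right (by omega) (by omega)
            · exact Nat.le_of_dvd (K+1+r).factorial_pos
                (Nat.factorial_mul_factorial_dvd_factorial_add (K+1) r)
          have hNatR : ((m.choose (r+1)) : ℝ) * (((K+1).factorial : ℝ) * (r.factorial : ℝ))
              ≤ 2^(m+1) * ((K+1+r).factorial : ℝ) := by exact_mod_cast hNat
          have hX : (0:ℝ) ≤ Real.exp (-c) * (c*ρ*p)^(r+1) * (c*σ*q)^(m-r) * (c*p)^K
              / ((m-r).factorial : ℝ) := by positivity
          have lhs_eq : Real.exp (-c) * c ^ (m+1+K) /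
                (((m+1+K).factorial : ℝ)) *
              ((m.choose (r+1) : ℝ) *
                (((m+1+K).factorial : ℝ) / (((K+1+r).factorial : ℝ) * ((m-r).factorial : ℝ))) *
                ρ ^ (r+1) * σ ^ (m-r) * p ^ (K+1+r) * q ^ (m-r))
              = (Real.exp (-c) * (c*ρ*p)^(r+1) * (c*σ*q)^(m-r) * (c*p)^K / ((m-r).factorial : ℝ))
                * ((m.choose (r+1) : ℝ) / ((K+1+r).factorial : ℝ)) := by
            have hsplit : c ^ (m+1+K) = c^K * c^(r+1) * c^(m-r) := by
              rw [← pow_add, ← pow_add]; congr 1; omega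
            have hsplitp : p ^ (K+1+r) = p^K * p^(r+1) := by
              rw [← pow_add]; congr 1; omega
            rw [hsplit, hsplitp, mul_pow, mul_pow, mul_pow, mul_pow]
            field_simp
            ring
          rw [lhs_eq]
          have rhs_eq : Real.exp (-c) * (c*p)^K / (((K+1).factorial : ℝ)) * A *
                (A^r * Bb^(m-r) / ((r.factorial : ℝ) * ((m-r).factorial : ℝ)))
              = (Real.exp (-c) * (c*ρ*p)^(r+1) * (c*σ*q)^(m-r) * (c*p)^K / ((m-r).factorial : ℝ))
                * (2^(m+1) / (((K+1).factorial : ℝ) * (r.factorial : ℝ))) := by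
            rw [hA, hB]
            have h2A : (2*c*p*ρ)^r = 2^r * (c*ρ*p)^r := by rw [mul_pow]; ring_nf
            have h2B : (2*c*σ*q)^(m-r) = 2^(m-r) * (c*σ*q)^(m-r) := by rw [mul_pow]; ring_nf
            have h2split : (2:ℝ)^(m+1) = 2 * 2^r * 2^(m-r) := by
              rw [← pow_succ', ← pow_add]; congr 1; omega
            rw [h2A, h2B, h2split, mul_pow, mul_pow, pow_succ (c*ρ*p) r]
            field_simp
          rw [rhs_eq]
          apply mul_le_mul_of_nonneg_left _ hX
          rw [div_le_div_iff₀ (by positivity) (by positivity)]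
          exact hNatR
      _ ≤ Real.exp (-c) * (c*p)^K / (((K+1).factorial : ℝ)) * A * ((A+Bb)^m / (m.factorial : ℝ)) := by
          rw [← Finset.mul_sum]
          have hf4 : (0:ℝ) < ((K+1).factorial : ℝ) := by exact_mod_cast (K+1).factorial_pos
          have hcoef : (0:ℝ) ≤ Real.exp (-c) * (c*p)^K / (((K+1).factorial : ℝ)) * A := by
            positivity
          exact mul_le_mul_of_nonneg_left (kou_binom_sum_le A Bb hA0.le hB0.le m) hcoef
      _ = Real.exp (-c) * (c*p)^K / (((K+1).factorial : ℝ)) * (A * (A+Bb)^m / (m.factorial : ℝ)) := by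
          ring

end KouSeries

lemma kou_exp_tsum (x : ℝ) : ∑' n : ℕ, x^n/(n.factorial:ℝ) = Real.exp x := by
  rw [Real.exp_eq_exp_ℝ, NormedSpace.exp_eq_tsum_div]

lemma kou_aCoef_bounds {lam t η₁ η₂ p q : ℝ}
    (hlam : 0 < lam) (ht : 0 < t) (hη₁ : 0 < η₁) (hη₂ : 0 < η₂)
    (hp : 0 < p) (hq : 0 < q) (k : ℕ) :
    Real.exp (lam*t*(η₂/(η₁+η₂))*q - lam*t) * (η₁*(lam*t)*p)^(k+1) /
        ((k.factorial : ℝ) * ((k+1).factorial : ℝ))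
      ≤ aCoef lam t η₁ η₂ p q k
    ∧ aCoef lam t η₁ η₂ p q k
      ≤ Real.exp (lam*t*(η₂/(η₁+η₂))*q - lam*t) * (η₁*(lam*t)*p)^(k+1) /
          ((k.factorial : ℝ) * ((k+1).factorial : ℝ))
        + (η₁*(lam*t)*p)^(k+1) * Real.exp (-(lam*t)) /
            ((k.factorial : ℝ) * ((k+2).factorial : ℝ))
          * ((2*(lam*t)*p*(η₁/(η₁+η₂))) *
              Real.exp (2*(lam*t)*p*(η₁/(η₁+η₂)) + 2*(lam*t)*(η₂/(η₁+η₂))*q)) := by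
  set K := k + 1 with hK
  set x := lam*t*(η₂/(η₁+η₂))*q with hx
  set A := 2*(lam*t)*p*(η₁/(η₁+η₂)) with hA
  set Bb := 2*(lam*t)*(η₂/(η₁+η₂))*q with hB
  have hx0 : 0 < x := by positivity
  have hA0 : 0 < A := by positivity
  have hB0 : 0 < Bb := by positivity
  have hfK : (0:ℝ) < (K.factorial : ℝ) := by exact_mod_cast K.factorial_pos
  have hfk : (0:ℝ) < (k.factorial : ℝ) := by exact_mod_cast k.factorial_pos
  have hfK1 : (0:ℝ) < ((K+1).factorial : ℝ) := by exact_mod_cast (K+1).factorial_pos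
  set sm : ℕ → ℝ := fun m => poisCoef lam t (m + K) * Pcoef η₁ η₂ p q (m + K) K with hsm
  set tm : ℕ → ℝ := fun m =>
    Real.exp (-(lam*t)) * (lam*t*p)^K * x^m / ((K.factorial : ℝ) * (m.factorial : ℝ)) with htmdef
  set vm : ℕ → ℝ := fun m =>
    Real.exp (-(lam*t)) * (lam*t*p)^K / (((K+1).factorial : ℝ)) * (A * (A+Bb)^m / (m.factorial : ℝ))
    with hvmdef
  have htm_eq : ∀ m, tm m =
      (Real.exp (-(lam*t)) * (lam*t*p)^K / (K.factorial : ℝ)) * (x^m / (m.factorial : ℝ)) := by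
    intro m; simp only [htmdef]; ring
  have hvm_eq : ∀ m, vm m =
      (Real.exp (-(lam*t)) * (lam*t*p)^K / (((K+1).factorial : ℝ)) * A) *
        ((A+Bb)^m / (m.factorial : ℝ)) := by
    intro m; simp only [hvmdef]; ring
  have htm_summ : Summable tm := by
    simp only [funext htm_eq]
    exact (Real.summable_pow_div_factorial x).mul_left _
  have hvm_summ : Summable vm := by
    simp only [funext hvm_eq]
    exact (Real.summable_pow_div_factorial (A+Bb)).mul_left _
  have hlow : ∀ m, tm m ≤ sm m := fun m => kou_sm_lower hlam ht hη₁ hη₂ hp hq K m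
  have hup : ∀ m, sm (m+1) ≤ tm (m+1) + vm m := fun m =>
    kou_sm_upper hlam ht hη₁ hη₂ hp hq K m
  have hsm_nonneg : ∀ m, 0 ≤ sm m := by
    intro m
    refine le_trans ?_ (hlow m)
    simp only [htmdef]
    positivity
  have hsm_summ : Summable sm := by
    rw [← summable_nat_add_iff 1]
    apply Summable.of_nonneg_of_le (fun m => hsm_nonneg (m+1)) hup
    exact ((summable_nat_add_iff 1).2 htm_summ).add hvm_summ
  have htsum_tm : ∑' m, tm m =
      Real.exp (-(lam*t)) * (lam*t*p)^K / (K.factorial : ℝ) * Real.exp x := by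
    simp only [funext htm_eq]
    rw [tsum_mul_left, kou_exp_tsum]
  have htsum_vm : ∑' m, vm m =
      Real.exp (-(lam*t)) * (lam*t*p)^K / (((K+1).factorial : ℝ)) * A * Real.exp (A+Bb) := by
    simp only [funext hvm_eq]
    rw [tsum_mul_left, kou_exp_tsum]
  have hS_low : Real.exp (-(lam*t)) * (lam*t*p)^K / (K.factorial : ℝ) * Real.exp x
      ≤ ∑' m, sm m := by
    rw [← htsum_tm]
    exact Summable.tsum_le_tsum hlow htm_summ hsm_summ
  have hS_up : ∑' m, sm m ≤
      Real.exp (-(lam*t)) * (lam*t*p)^K / (K.factorial : ℝ) * Real.exp x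
        + Real.exp (-(lam*t)) * (lam*t*p)^K / (((K+1).factorial : ℝ)) * A * Real.exp (A+Bb) := by
    rw [Summable.tsum_eq_zero_add hsm_summ]
    have h0 : sm 0 = tm 0 := by
      simp only [hsm, htmdef]
      rw [zero_add, kou_sm_zero hlam ht hη₁ hη₂ hp hq]
      simp
    rw [h0]
    have htail : ∑' m, sm (m+1) ≤ (∑' m, tm (m+1)) + ∑' m, vm m := by
      calc ∑' m, sm (m+1) ≤ ∑' m, (tm (m+1) + vm m) :=
            Summable.tsum_le_tsum hup ((summable_nat_add_iff 1).2 hsm_summ)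
              (((summable_nat_add_iff 1).2 htm_summ).add hvm_summ)
        _ = (∑' m, tm (m+1)) + ∑' m, vm m :=
            Summable.tsum_add ((summable_nat_add_iff 1).2 htm_summ) hvm_summ
    have hsplit_tm : tm 0 + ∑' m, tm (m+1) = ∑' m, tm m := (Summable.tsum_eq_zero_add htm_summ).symm
    calc tm 0 + ∑' m, sm (m+1) ≤ tm 0 + ((∑' m, tm (m+1)) + ∑' m, vm m) := by linarith
      _ = (∑' m, tm m) + ∑' m, vm m := by rw [← hsplit_tm]; ring
      _ = _ := by rw [htsum_tm, htsum_vm]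
  have hfactor : aCoef lam t η₁ η₂ p q k = η₁^K / (k.factorial : ℝ) * ∑' m, sm m := rfl
  have hcoef_pos : 0 < η₁^K / (k.factorial : ℝ) := by positivity
  constructor
  · calc Real.exp (x - lam*t) * (η₁*(lam*t)*p)^K / ((k.factorial : ℝ) * (K.factorial : ℝ))
        = η₁^K / (k.factorial : ℝ) *
          (Real.exp (-(lam*t)) * (lam*t*p)^K / (K.factorial : ℝ) * Real.exp x) := by
          rw [Real.exp_sub, mul_pow, mul_pow, Real.exp_neg]
          field_simp
          ring
      _ ≤ _ := by
          rw [hfactor]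
          exact mul_le_mul_of_nonneg_left hS_low hcoef_pos.le
  · calc aCoef lam t η₁ η₂ p q k
        ≤ η₁^K / (k.factorial : ℝ) *
          (Real.exp (-(lam*t)) * (lam*t*p)^K / (K.factorial : ℝ) * Real.exp x
            + Real.exp (-(lam*t)) * (lam*t*p)^K / (((K+1).factorial : ℝ)) * A * Real.exp (A+Bb)) := by
          rw [hfactor]
          exact mul_le_mul_of_nonneg_left hS_up hcoef_pos.le
      _ = Real.exp (x - lam*t) * (η₁*(lam*t)*p)^K / ((k.factorial : ℝ) * (K.factorial : ℝ))
          + (η₁*(lam*t)*p)^K * Real.exp (-(lam*t)) / ((k.factorial : ℝ) * ((K+1).factorial : ℝ))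
            * (A * Real.exp (A+Bb)) := by
          rw [Real.exp_sub, mul_pow, mul_pow, Real.exp_neg]
          field_simp
          ring

lemma kou_M_eq {t lam η₁ η₂ p q s r : ℝ}
    (ht : 0 < t) (hlam : 0 < lam) (hη₁ : 0 < η₁) (hη₂ : 0 < η₂) (hp : 0 < p)
    (hs : s = 2 * Real.sqrt Real.pi *
      (η₁ * lam * t * p / (2 * Real.pi) *
        Real.exp (η₂ * lam * t * q / (η₁ + η₂) - lam * t)))
    (hr : r = 2 * Real.sqrt (η₁ * lam * t * p)) (k : ℕ) :
    gammaRatio (-(3:ℝ)/2) k * dTilde s r k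
      = Real.exp (lam*t*(η₂/(η₁+η₂))*q - lam*t) * (η₁*(lam*t)*p)^(k+1) /
          ((k.factorial:ℝ) * ((k+1).factorial:ℝ)) * kouGRat k := by
  have hB : (0:ℝ) ≤ η₁*lam*t*p := by positivity
  have hr2 : r^(2*k) = (4*(η₁*lam*t*p))^k := by
    rw [pow_mul, hr]
    congr 1
    rw [mul_pow, Real.sq_sqrt hB]; norm_num
  have harg : η₂ * lam * t * q / (η₁ + η₂) - lam*t = lam*t*(η₂/(η₁+η₂))*q - lam*t := by
    ring
  rw [gammaRatio, dTilde, hr2, hs, harg]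
  have hargΓ : (k:ℝ) - (-(3:ℝ)/2) + 1 = ((k+2:ℕ):ℝ) + 1/2 := by push_cast; ring
  rw [hargΓ, kou_gammaNatHalf (k+2), Real.Gamma_nat_eq_factorial]
  simp only [kouGRat]
  have h16 : (16:ℝ)^(k+1) = 4^(k+2) * 4^k := by
    rw [show (16:ℝ) = 4*4 by norm_num, mul_pow, ← pow_add, ← pow_add]
    congr 1
    omega
  rw [h16]
  have e2 : 2*(k+2) = 2*k+4 := by ring
  rw [e2]
  set sp := Real.sqrt Real.pi with hsp
  have hsq : (0:ℝ) < sp := Real.sqrt_pos.2 Real.pi_pos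
  have hpisq : Real.pi = sp * sp := (Real.mul_self_sqrt Real.pi_pos.le).symm
  rw [hpisq]
  have hf1 : (0:ℝ) < (k.factorial : ℝ) := by exact_mod_cast k.factorial_pos
  have hf2 : (0:ℝ) < ((k+1).factorial : ℝ) := by exact_mod_cast (k+1).factorial_pos
  have hf3 : (0:ℝ) < ((k+2).factorial : ℝ) := by exact_mod_cast (k+2).factorial_pos
  have hf4 : (0:ℝ) < ((2*k).factorial : ℝ) := by exact_mod_cast (2*k).factorial_pos
  have hf5 : (0:ℝ) < ((2*k+4).factorial : ℝ) := by exact_mod_cast (2*k+4).factorial_pos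
  have hsp0 : sp ≠ 0 := ne_of_gt hsq
  field_simp
  ring

lemma kou_N_eq (s r : ℝ) (k : ℕ) :
    gammaRatio (-(5:ℝ)/2) k * dTilde s r k
      = gammaRatio (-(3:ℝ)/2) k * dTilde s r k / ((k:ℝ) + 5/2) := by
  rw [gammaRatio, gammaRatio]
  have h1 : (k:ℝ) - (-(5:ℝ)/2) + 1 = ((k:ℝ) + 5/2) + 1 := by ring
  have h2 : (k:ℝ) - (-(3:ℝ)/2) + 1 = (k:ℝ) + 5/2 := by ring
  have hk : (0:ℝ) < (k:ℝ) + 5/2 := by positivity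
  rw [h1, h2, Real.Gamma_add_one (ne_of_gt hk)]
  rw [div_mul_eq_mul_div, div_mul_eq_mul_div, div_div,
    mul_comm (((k:ℝ)+5/2)) (Real.Gamma (((k:ℝ)+5/2)))]


set_option maxHeartbeats 1000000 in
/-- Lemma comparing the coefficients `a_k` with Gamma-ratio
multiples of `d̃_k`.  With `s = 2√π C₁` and `r = 2√B₁`, where
`C₁ = (η₁λtp/(2π)) exp{η₂λtq/(η₁+η₂) − λt}` and `B₁ = η₁λtp`, there exists
`δ₄ > 0` such that `|a_k − c_{k,−3/2} d̃_k| ≤ δ₄ c_{k,−5/2} d̃_k` for all `k ≥ 0`. -/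
theorem aCoef_gamma_ratio_comparison
    (t lam η₁ η₂ p q : ℝ)
    (ht : 0 < t) (hlam : 0 < lam) (hη₁ : 1 < η₁) (hη₂ : 0 < η₂)
    (hp : 0 < p) (hq : 0 < q) (hpq : p + q = 1)
    (s r : ℝ)
    (hs : s = 2 * Real.sqrt Real.pi *
      (η₁ * lam * t * p / (2 * Real.pi) *
        Real.exp (η₂ * lam * t * q / (η₁ + η₂) - lam * t)))
    (hr : r = 2 * Real.sqrt (η₁ * lam * t * p)) :
    ∃ δ₄ : ℝ, 0 < δ₄ ∧ ∀ k : ℕ,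
      |aCoef lam t η₁ η₂ p q k - gammaRatio (-(3:ℝ)/2) k * dTilde s r k| ≤
        δ₄ * gammaRatio (-(5:ℝ)/2) k * dTilde s r k := by
  set c := lam * t with hc
  have hη₁0 : 0 < η₁ := lt_trans zero_lt_one hη₁
  have hc0 : 0 < c := by positivity
  set x := lam*t*(η₂/(η₁+η₂))*q with hx
  set A := 2*(lam*t)*p*(η₁/(η₁+η₂)) with hA
  set Bb := 2*(lam*t)*(η₂/(η₁+η₂))*q with hB
  set E := A * Real.exp (A + Bb) * Real.exp (-x) with hE
  have hx0 : 0 < x := by positivity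
  have hA0 : 0 < A := by positivity
  have hE0 : 0 < E := by positivity
  refine ⟨5*(1+E), by positivity, fun k => ?_⟩
  obtain ⟨h1, h2⟩ := kou_aCoef_bounds hlam ht hη₁0 hη₂ hp hq k
  set κ := (k:ℝ) with hκdef
  have hκ : 0 ≤ κ := Nat.cast_nonneg k
  have hf1 : (0:ℝ) < (k.factorial : ℝ) := by exact_mod_cast k.factorial_pos
  have hf2 : (0:ℝ) < ((k+1).factorial : ℝ) := by exact_mod_cast (k+1).factorial_pos
  have hf3 : (0:ℝ) < ((k+2).factorial : ℝ) := by exact_mod_cast (k+2).factorial_pos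
  set L := Real.exp (x - lam*t) * (η₁*(lam*t)*p)^(k+1) /
      ((k.factorial : ℝ) * ((k+1).factorial : ℝ)) with hL
  set T := (η₁*(lam*t)*p)^(k+1) * Real.exp (-(lam*t)) /
      ((k.factorial : ℝ) * ((k+2).factorial : ℝ)) * (A * Real.exp (A + Bb)) with hT
  have hLpos : 0 < L := by
    rw [hL]; positivity
  have hTpos : 0 < T := by
    rw [hT]; positivity
  set g := kouGRat k with hg
  have hM : gammaRatio (-(3:ℝ)/2) k * dTilde s r k = L * g :=
    kou_M_eq ht hlam hη₁0 hη₂ hp hs hr k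
  have hN : gammaRatio (-(5:ℝ)/2) k * dTilde s r k = L * g / (κ + 5/2) := by
    rw [kou_N_eq, hM]
  have hg1 : (2*κ+1)/(2*κ+3) ≤ g := kouGRat_lower k
  have hg2 : g ≤ (2*κ+1)/(2*κ+2) := kouGRat_upper k
  have hg1' : 2*κ+1 ≤ g*(2*κ+3) := by
    rw [div_le_iff₀ (by positivity)] at hg1
    linarith
  have hg_le_one : g ≤ 1 := by
    refine hg2.trans ?_
    rw [div_le_one (by positivity)]
    linarith
  have hg_pos : 0 < g := by
    refine lt_of_lt_of_le ?_ hg1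
    positivity
  -- T * (κ+2) = L * E
  have hfact : ((k+2).factorial : ℝ) = (κ+2) * ((k+1).factorial : ℝ) := by
    have : (k+2).factorial = (k+2) * (k+1).factorial := Nat.factorial_succ (k+1)
    rw [this]
    push_cast
    ring
  have hT' : T * (κ+2) = L * E := by
    rw [hT, hL, hE, hfact]
    rw [Real.exp_sub]
    simp only [Real.exp_neg]
    have he1 : Real.exp (lam*t) ≠ 0 := Real.exp_ne_zero _
    have he2 : Real.exp x ≠ 0 := Real.exp_ne_zero _
    have hκ2 : (κ:ℝ) + 2 ≠ 0 := by positivity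
    field_simp
  -- main estimate
  have haM : |aCoef lam t η₁ η₂ p q k - gammaRatio (-(3:ℝ)/2) k * dTilde s r k|
      = aCoef lam t η₁ η₂ p q k - L * g := by
    rw [hM, abs_of_nonneg]
    have : L * g ≤ L := by
      nth_rewrite 2 [← mul_one L]
      exact mul_le_mul_of_nonneg_left hg_le_one hLpos.le
    linarith
  rw [haM]
  have hkey : aCoef lam t η₁ η₂ p q k - L * g ≤ 2*L*(1+E)/(2*κ+3) := by
    rw [le_div_iff₀ (by positivity)]
    have hgL := mul_le_mul_of_nonneg_left hg1' hLpos.le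
    have h2κ3 : (0:ℝ) < 2*κ+3 := by positivity
    have h2' := mul_le_mul_of_nonneg_right h2 h2κ3.le
    linarith [hT', hTpos, h2', hgL]
  refine hkey.trans ?_
  rw [mul_assoc (5*(1+E)) (gammaRatio (-(5:ℝ)/2) k) (dTilde s r k), hN, mul_div_assoc' (5*(1+E)) (L*g) (κ+5/2)]
  rw [div_le_div_iff₀ (by positivity) (by positivity)]
  have hgg := mul_le_mul_of_nonneg_left hg1'
    (by positivity : (0:ℝ) ≤ L*(1+E))
  linarith [hgg, mul_nonneg hLpos.le hκ, mul_nonneg (mul_nonneg hLpos.le hE0.le) hκ]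
end

section
/- For every r > 0, the following asymptotic formulas hold as u → ∞: ∫_0^1 e^{r√u·z}·z·(1−z²)^{1/2} dz = e^{r√u}·[√2·Γ(3/2)·r^{−3/2}·u^{−3/4} + O(u^{−5/4})] and ∫_0^1 e^{r√u·z}·z·(1−z²)^{3/2} dz = e^{r√u}·[2^{3/2}·Γ(5/2)·r^{−5/2}·u^{−5/4} + O(u^{−7/4})]. -/
open Filter Asymptotics MeasureTheory Set

-- MVT bound
lemma key_rpow_bound (α : ℝ) (hα : 0 < α) {t : ℝ} (ht : t ∈ Set.Icc (0:ℝ) 1) :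
    |(2 - t) ^ α - (2:ℝ) ^ α| ≤ α * 2 ^ α * t := by
  obtain ⟨ht0, ht1⟩ := ht
  have h := Convex.norm_image_sub_le_of_norm_hasDerivWithin_le
    (f := fun x : ℝ => x ^ α) (f' := fun x : ℝ => α * x ^ (α - 1)) (s := Set.Icc (1:ℝ) 2)
    (fun x hx => (Real.hasDerivAt_rpow_const (Or.inl (by linarith [hx.1] : x ≠ 0))).hasDerivWithinAt)
    (fun x hx => by
      have hx1 : (1:ℝ) ≤ x := hx.1
      have h1 : x ^ (α - 1) ≤ x ^ α := Real.rpow_le_rpow_of_exponent_le hx1 (by linarith)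
      have h2 : x ^ α ≤ 2 ^ α := Real.rpow_le_rpow (by linarith) hx.2 hα.le
      have h3 : (0:ℝ) ≤ x ^ (α - 1) := Real.rpow_nonneg (by linarith) _
      rw [Real.norm_eq_abs, abs_mul, abs_of_nonneg hα.le, abs_of_nonneg h3]
      calc α * x ^ (α - 1) ≤ α * (2 ^ α) := by nlinarith
        _ = α * 2 ^ α := rfl)
    (convex_Icc _ _) (x := (2:ℝ)) (y := 2 - t) ⟨le_refl 1 |>.trans (by norm_num), le_rfl⟩
    ⟨by linarith, by linarith⟩
  simpa [Real.norm_eq_abs, abs_of_nonneg ht0] using h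

lemma key_bound (α : ℝ) (hα : 0 < α) {t : ℝ} (ht : t ∈ Set.Icc (0:ℝ) 1) :
    |(1 - t) * (2 - t) ^ α - 2 ^ α| ≤ (1 + α) * 2 ^ α * t := by
  obtain ⟨ht0, ht1⟩ := ht
  have h1 := key_rpow_bound α hα ⟨ht0, ht1⟩
  have h2 : (0:ℝ) ≤ (2 - t) ^ α := Real.rpow_nonneg (by linarith) _
  have h3 : (2 - t) ^ α ≤ 2 ^ α := Real.rpow_le_rpow (by linarith) (by linarith) hα.le
  have : (1 - t) * (2 - t) ^ α - 2 ^ α = ((2 - t) ^ α - 2 ^ α) - t * (2 - t) ^ α := by ring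
  rw [this]
  have h4 : |((2 - t) ^ α - 2 ^ α) - t * (2 - t) ^ α| ≤ |(2 - t) ^ α - 2 ^ α| + |t * (2 - t) ^ α| :=
    abs_sub _ _
  have h5 : |t * (2 - t) ^ α| = t * (2 - t) ^ α := abs_of_nonneg (by positivity)
  have h2p : (0:ℝ) < (2:ℝ) ^ α := Real.rpow_pos_of_pos (by norm_num) _
  nlinarith [h4]

-- integrability of t^β e^{-bt} on Ioi 0
lemma watson_integrable {b β : ℝ} (hb : 0 < b) (hβ : 0 < β) :
    IntegrableOn (fun t : ℝ => t ^ β * Real.exp (-(b * t))) (Set.Ioi 0) := by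
  have h := integrableOn_rpow_mul_exp_neg_mul_rpow (p := 1) (s := β) (b := b)
    (by linarith) one_pos hb
  refine h.congr_fun (fun x hx => ?_) measurableSet_Ioi
  simp only [Real.rpow_one, neg_mul]

-- value of the full integral
lemma watson_gamma {b β : ℝ} (hb : 0 < b) (hβ : 0 < β) :
    ∫ t in Set.Ioi (0:ℝ), t ^ β * Real.exp (-(b * t))
      = Real.Gamma (β + 1) * b ^ (-(β + 1)) := by
  have h := Real.integral_rpow_mul_exp_neg_mul_Ioi (a := β + 1) (r := b) (by linarith) hb
  simp only [add_sub_cancel_right] at h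
  rw [h, one_div, Real.inv_rpow hb.le, ← Real.rpow_neg hb.le, mul_comm]

lemma watson_master (α : ℝ) (hα : 0 < α) :
    ∃ D : ℝ, 0 ≤ D ∧ ∀ᶠ s : ℝ in atTop,
      |(∫ t in Set.Ioc (0:ℝ) 1,
            t ^ α * ((1 - t) * (2 - t) ^ α) * Real.exp (-(s * t))) -
          2 ^ α * Real.Gamma (α + 1) * s ^ (-(α + 1))| ≤ D * s ^ (-(α + 2)) := by
  have h2p : (0:ℝ) < (2:ℝ) ^ α := Real.rpow_pos_of_pos (by norm_num) _
  have hΓ1 : (0:ℝ) < Real.Gamma (α + 1) := Real.Gamma_pos_of_pos (by linarith)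
  have hΓ2 : (0:ℝ) < Real.Gamma (α + 2) := Real.Gamma_pos_of_pos (by linarith)
  set K : ℝ := 2 ^ α * Real.Gamma (α + 1) with hK
  have hKpos : 0 < K := by positivity
  refine ⟨(1 + α) * 2 ^ α * Real.Gamma (α + 2) + 1, by positivity, ?_⟩
  have hev : ∀ᶠ s : ℝ in atTop,
      s ^ (α + 2) * Real.exp (-1 * s) < Real.exp (-1) / K :=
    (tendsto_rpow_mul_exp_neg_mul_atTop_nhds_zero (α + 2) 1 one_pos).eventually_lt_const
      (by positivity)
  filter_upwards [hev, eventually_ge_atTop (1:ℝ)] with s hs1 hs2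
  have hs0 : (0:ℝ) < s := lt_of_lt_of_le one_pos hs2
  -- integrability facts
  have hintα : IntegrableOn (fun t : ℝ => t ^ α * Real.exp (-(s * t))) (Set.Ioi 0) :=
    watson_integrable hs0 hα
  have hintα1 : IntegrableOn (fun t : ℝ => t ^ (α + 1) * Real.exp (-(s * t))) (Set.Ioi 0) :=
    watson_integrable hs0 (by linarith)
  have hA_int : IntegrableOn (fun t : ℝ => t ^ α * Real.exp (-(s * t))) (Set.Ioc 0 1) :=
    hintα.mono_set Set.Ioc_subset_Ioi_self
  have hA1_int : IntegrableOn (fun t : ℝ => t ^ (α + 1) * Real.exp (-(s * t))) (Set.Ioc 0 1) :=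
    hintα1.mono_set Set.Ioc_subset_Ioi_self
  -- continuity ⇒ integrability of the main integrand
  have hcont : ContinuousOn
      (fun t : ℝ => t ^ α * ((1 - t) * (2 - t) ^ α) * Real.exp (-(s * t)))
      (Set.Icc 0 1) := by
    apply ContinuousOn.mul
    apply ContinuousOn.mul
    · exact continuousOn_id.rpow_const (fun x hx => Or.inr hα.le)
    · apply ContinuousOn.mul
      · exact (continuous_const.sub continuous_id).continuousOn
      · exact ((continuous_const.sub continuous_id).continuousOn).rpow_const
          (fun x hx => Or.inl (by intro h; have := hx.2; simp at h; linarith))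
    · exact (Real.continuous_exp.comp (continuous_const.mul continuous_id).neg).continuousOn
  have hI_int : IntegrableOn
      (fun t : ℝ => t ^ α * ((1 - t) * (2 - t) ^ α) * Real.exp (-(s * t)))
      (Set.Ioc 0 1) :=
    (hcont.integrableOn_Icc).mono_set Set.Ioc_subset_Icc_self
  set I : ℝ := ∫ t in Set.Ioc (0:ℝ) 1,
      t ^ α * ((1 - t) * (2 - t) ^ α) * Real.exp (-(s * t)) with hI
  set A : ℝ := ∫ t in Set.Ioc (0:ℝ) 1, t ^ α * Real.exp (-(s * t)) with hA
  -- Step 1 : |I - 2^α A| ≤ (1+α) 2^α Γ(α+2) s^{-(α+2)}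
  have step1 : |I - 2 ^ α * A| ≤ (1 + α) * 2 ^ α * (Real.Gamma (α + 2) * s ^ (-(α + 2))) := by
    have hIA : I - 2 ^ α * A = ∫ t in Set.Ioc (0:ℝ) 1,
        (t ^ α * ((1 - t) * (2 - t) ^ α - 2 ^ α) * Real.exp (-(s * t))) := by
      rw [hI, hA, ← MeasureTheory.integral_const_mul, ← MeasureTheory.integral_sub hI_int
        (hA_int.const_mul _)]
      congr 1; funext t; ring
    rw [hIA]
    have hbound : ‖∫ t in Set.Ioc (0:ℝ) 1,
        (t ^ α * ((1 - t) * (2 - t) ^ α - 2 ^ α) * Real.exp (-(s * t)))‖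
        ≤ ∫ t in Set.Ioc (0:ℝ) 1,
            ((1 + α) * 2 ^ α) * (t ^ (α + 1) * Real.exp (-(s * t))) := by
      apply MeasureTheory.norm_integral_le_of_norm_le (hA1_int.const_mul _)
      refine (MeasureTheory.ae_restrict_iff' measurableSet_Ioc).2 (Filter.Eventually.of_forall ?_)
      intro t ht
      have ht0 : 0 < t := ht.1
      have ht1 : t ≤ 1 := ht.2
      have hb := key_bound α hα ⟨ht0.le, ht1⟩
      have htp : (0:ℝ) ≤ t ^ α := Real.rpow_nonneg ht0.le _
      have hexp : (0:ℝ) < Real.exp (-(s * t)) := Real.exp_pos _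
      rw [Real.norm_eq_abs, abs_mul, abs_mul, abs_of_nonneg htp,
        abs_of_nonneg hexp.le, Real.rpow_add_one ht0.ne']
      calc t ^ α * |(1 - t) * (2 - t) ^ α - 2 ^ α| * Real.exp (-(s * t))
          ≤ t ^ α * ((1 + α) * 2 ^ α * t) * Real.exp (-(s * t)) := by
            apply mul_le_mul_of_nonneg_right _ hexp.le
            exact mul_le_mul_of_nonneg_left hb htp
        _ = (1 + α) * 2 ^ α * (t ^ α * t * Real.exp (-(s * t))) := by ring
    rw [Real.norm_eq_abs] at hbound
    refine hbound.trans ?_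
    rw [MeasureTheory.integral_const_mul]
    apply mul_le_mul_of_nonneg_left _ (by positivity : (0:ℝ) ≤ (1 + α) * 2 ^ α)
    have hmono : (∫ t in Set.Ioc (0:ℝ) 1, t ^ (α + 1) * Real.exp (-(s * t)))
        ≤ ∫ t in Set.Ioi (0:ℝ), t ^ (α + 1) * Real.exp (-(s * t)) := by
      apply MeasureTheory.setIntegral_mono_set hintα1
      · refine (MeasureTheory.ae_restrict_iff' measurableSet_Ioi).2
          (Filter.Eventually.of_forall ?_)
        intro t ht
        exact mul_nonneg (Real.rpow_nonneg (le_of_lt ht) _) (Real.exp_pos _).le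
      · exact HasSubset.Subset.eventuallyLE Set.Ioc_subset_Ioi_self
    rw [watson_gamma hs0 (by linarith : (0:ℝ) < α + 1)] at hmono
    have : α + 1 + 1 = α + 2 := by ring
    rw [this] at hmono
    exact hmono
  -- Step 2 : tail estimate
  have hM : Real.Gamma (α + 1) * s ^ (-(α + 1)) = A + ∫ t in Set.Ioi (1:ℝ),
      t ^ α * Real.exp (-(s * t)) := by
    rw [← watson_gamma hs0 hα, ← Set.Ioc_union_Ioi_eq_Ioi (zero_le_one' ℝ),
      MeasureTheory.setIntegral_union (Set.Ioc_disjoint_Ioi le_rfl) measurableSet_Ioi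
        hA_int (hintα.mono_set (Set.Ioi_subset_Ioi zero_le_one))]
  set T : ℝ := ∫ t in Set.Ioi (1:ℝ), t ^ α * Real.exp (-(s * t)) with hT
  have hT_nonneg : 0 ≤ T := by
    apply MeasureTheory.setIntegral_nonneg measurableSet_Ioi
    intro t ht
    exact mul_nonneg (Real.rpow_nonneg (by linarith [Set.mem_Ioi.1 ht] : (0:ℝ) ≤ t) _)
      (Real.exp_pos _).le
  have hT_le : T ≤ Real.exp (1 - s) * (Real.Gamma (α + 1) * 1 ^ (-(α + 1))) := by
    have hTle1 : T ≤ ∫ t in Set.Ioi (1:ℝ),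
        Real.exp (1 - s) * (t ^ α * Real.exp (-(1 * t))) := by
      apply MeasureTheory.setIntegral_mono_on
        (hintα.mono_set (Set.Ioi_subset_Ioi zero_le_one))
        (((watson_integrable one_pos hα).mono_set
          (Set.Ioi_subset_Ioi zero_le_one)).const_mul _)
        measurableSet_Ioi
      intro t ht
      have ht1 : (1:ℝ) < t := Set.mem_Ioi.1 ht
      have htp : (0:ℝ) ≤ t ^ α := Real.rpow_nonneg (by linarith) _
      have hexp : Real.exp (-(s * t)) ≤ Real.exp (1 - s) * Real.exp (-(1 * t)) := by
        rw [← Real.exp_add]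
        apply Real.exp_le_exp.2
        nlinarith
      calc t ^ α * Real.exp (-(s * t)) ≤ t ^ α * (Real.exp (1 - s) * Real.exp (-(1 * t))) :=
            mul_le_mul_of_nonneg_left hexp htp
        _ = Real.exp (1 - s) * (t ^ α * Real.exp (-(1 * t))) := by ring
    refine hTle1.trans ?_
    rw [MeasureTheory.integral_const_mul]
    apply mul_le_mul_of_nonneg_left _ (Real.exp_pos _).le
    rw [← watson_gamma one_pos hα]
    apply MeasureTheory.setIntegral_mono_set (watson_integrable one_pos hα)
    · refine (MeasureTheory.ae_restrict_iff' measurableSet_Ioi).2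
        (Filter.Eventually.of_forall ?_)
      intro t ht
      exact mul_nonneg (Real.rpow_nonneg (le_of_lt ht) _) (Real.exp_pos _).le
    · exact HasSubset.Subset.eventuallyLE (Set.Ioi_subset_Ioi zero_le_one)
  have hT_le' : 2 ^ α * T ≤ s ^ (-(α + 2)) := by
    rw [Real.one_rpow] at hT_le
    have hsp : (0:ℝ) < s ^ (α + 2) := Real.rpow_pos_of_pos hs0 _
    have hkey : K * Real.exp (1 - s) * s ^ (α + 2) ≤ 1 := by
      have heq : K * Real.exp (1 - s) * s ^ (α + 2)
          = K * Real.exp 1 * (s ^ (α + 2) * Real.exp (-1 * s)) := by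
        rw [neg_one_mul, Real.exp_sub, Real.exp_neg]
        field_simp
      rw [heq]
      have h1 : K * Real.exp 1 * (s ^ (α + 2) * Real.exp (-1 * s))
          ≤ K * Real.exp 1 * (Real.exp (-1) / K) := by
        apply mul_le_mul_of_nonneg_left hs1.le (by positivity)
      refine h1.trans ?_
      rw [Real.exp_neg]
      have hone : K * Real.exp 1 * ((Real.exp 1)⁻¹ / K) = 1 := by
        field_simp
      exact le_of_eq hone
    have h2 : 2 ^ α * T ≤ K * Real.exp (1 - s) := by
      calc 2 ^ α * T ≤ 2 ^ α * (Real.exp (1 - s) * Real.Gamma (α + 1)) := by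
            rw [mul_comm (Real.exp (1 - s))] at hT_le ⊢
            exact mul_le_mul_of_nonneg_left (by linarith [hT_le]) h2p.le
        _ = K * Real.exp (1 - s) := by rw [hK]; ring
    refine h2.trans ?_
    rw [Real.rpow_neg hs0.le, ← one_div, le_div_iff₀ hsp]
    exact hkey
  -- assemble
  calc |I - 2 ^ α * Real.Gamma (α + 1) * s ^ (-(α + 1))|
      ≤ |I - 2 ^ α * A| + |2 ^ α * A - 2 ^ α * Real.Gamma (α + 1) * s ^ (-(α + 1))| := by
        have heq0 : I - 2 ^ α * Real.Gamma (α + 1) * s ^ (-(α + 1))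
            = (I - 2 ^ α * A) + (2 ^ α * A - 2 ^ α * Real.Gamma (α + 1) * s ^ (-(α + 1))) := by
          ring
        rw [heq0]; exact abs_add_le _ _
    _ ≤ (1 + α) * 2 ^ α * (Real.Gamma (α + 2) * s ^ (-(α + 2))) + s ^ (-(α + 2)) := by
        have heq2 : 2 ^ α * A - 2 ^ α * Real.Gamma (α + 1) * s ^ (-(α + 1)) = -(2 ^ α * T) := by
          rw [mul_assoc, hM]; ring
        rw [heq2, abs_neg, abs_of_nonneg (mul_nonneg h2p.le hT_nonneg)]
        exact add_le_add step1 hT_le'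
    _ = ((1 + α) * 2 ^ α * Real.Gamma (α + 2) + 1) * s ^ (-(α + 2)) := by ring

lemma integral_rewrite (α s : ℝ) (hα : 0 < α) :
    (∫ z in (0:ℝ)..1, Real.exp (s * z) * z * (1 - z ^ 2) ^ α)
      = Real.exp s *
        ∫ t in Set.Ioc (0:ℝ) 1, t ^ α * ((1 - t) * (2 - t) ^ α) * Real.exp (-(s * t)) := by
  have h1 : (∫ z in (0:ℝ)..1, Real.exp (s * z) * z * (1 - z ^ 2) ^ α)
      = ∫ t in (0:ℝ)..1, Real.exp (s * (1 - t)) * (1 - t) * (1 - (1 - t) ^ 2) ^ α := by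
    have h := intervalIntegral.integral_comp_sub_left (a := (0:ℝ)) (b := (1:ℝ))
      (fun z => Real.exp (s * z) * z * (1 - z ^ 2) ^ α) 1
    norm_num at h
    exact h.symm
  rw [h1]
  have h2 : ∀ t ∈ Set.uIcc (0:ℝ) 1,
      Real.exp (s * (1 - t)) * (1 - t) * (1 - (1 - t) ^ 2) ^ α
        = Real.exp s * (t ^ α * ((1 - t) * (2 - t) ^ α) * Real.exp (-(s * t))) := by
    intro t ht
    rw [Set.uIcc_of_le zero_le_one] at ht
    obtain ⟨ht0, ht1⟩ := ht
    have hbase : (1 - (1 - t) ^ 2) = t * (2 - t) := by ring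
    have hexp : Real.exp (s * (1 - t)) = Real.exp s * Real.exp (-(s * t)) := by
      rw [← Real.exp_add]; congr 1; ring
    rw [hbase, Real.mul_rpow ht0 (by linarith), hexp]; ring
  rw [intervalIntegral.integral_congr h2, intervalIntegral.integral_const_mul,
    intervalIntegral.integral_of_le zero_le_one]

lemma conj_big_o (r : ℝ) (hr : 0 < r) (α : ℝ) (hα : 0 < α) :
    (fun u : ℝ => (∫ z in (0:ℝ)..1, Real.exp (r * Real.sqrt u * z) * z * (1 - z ^ 2) ^ α) -
        Real.exp (r * Real.sqrt u) *
          (2 ^ α * Real.Gamma (α + 1) * r ^ (-(α + 1)) * u ^ (-(α + 1) / 2)))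
      =O[atTop] fun u : ℝ => Real.exp (r * Real.sqrt u) * u ^ (-(α + 2) / 2) := by
  obtain ⟨D, hD, hmas⟩ := watson_master α hα
  have hsqrt : Filter.Tendsto Real.sqrt atTop atTop := by
    refine (tendsto_rpow_atTop (by norm_num : (0:ℝ) < 1/2)).congr' ?_
    filter_upwards [Filter.eventually_ge_atTop (0:ℝ)] with x hx
    exact (Real.sqrt_eq_rpow x).symm
  have hst : Filter.Tendsto (fun u : ℝ => r * Real.sqrt u) atTop atTop :=
    Filter.Tendsto.const_mul_atTop hr hsqrt
  rw [Asymptotics.isBigO_iff]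
  refine ⟨D * r ^ (-(α + 2)), ?_⟩
  filter_upwards [hst.eventually hmas, Filter.eventually_gt_atTop (0:ℝ)] with u hu hu0
  set s := r * Real.sqrt u with hs
  have hsq : 0 < Real.sqrt u := Real.sqrt_pos.2 hu0
  have hs0 : 0 < s := mul_pos hr hsq
  have hpow : ∀ c : ℝ, s ^ (-c) = r ^ (-c) * u ^ (-c / 2) := by
    intro c
    rw [hs, Real.mul_rpow hr.le (Real.sqrt_nonneg u)]
    congr 1
    rw [Real.sqrt_eq_rpow, ← Real.rpow_mul (le_of_lt hu0)]
    congr 1; ring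
  rw [integral_rewrite α s hα]
  set J : ℝ := ∫ t in Set.Ioc (0:ℝ) 1,
      t ^ α * ((1 - t) * (2 - t) ^ α) * Real.exp (-(s * t)) with hJ
  have hmain : Real.exp s * (2 ^ α * Real.Gamma (α + 1) * r ^ (-(α + 1)) * u ^ (-(α + 1) / 2))
      = Real.exp s * (2 ^ α * Real.Gamma (α + 1) * s ^ (-(α + 1))) := by
    rw [hpow (α + 1)]; ring
  rw [hmain]
  have hep : 0 < Real.exp s := Real.exp_pos s
  calc ‖Real.exp s * J - Real.exp s * (2 ^ α * Real.Gamma (α + 1) * s ^ (-(α + 1)))‖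
      = Real.exp s * |J - 2 ^ α * Real.Gamma (α + 1) * s ^ (-(α + 1))| := by
        rw [← mul_sub, Real.norm_eq_abs, abs_mul, abs_of_nonneg hep.le]
    _ ≤ Real.exp s * (D * s ^ (-(α + 2))) := mul_le_mul_of_nonneg_left hu hep.le
    _ = D * r ^ (-(α + 2)) * (Real.exp s * u ^ (-(α + 2) / 2)) := by
        rw [hpow (α + 2)]; ring
    _ ≤ D * r ^ (-(α + 2)) * ‖Real.exp s * u ^ (-(α + 2) / 2)‖ := by
        rw [Real.norm_eq_abs, abs_of_nonneg (by positivity)]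

/-- Watson's lemma applied to the two Laplace-type integrals.
For every `r > 0`, as `u → ∞`:
`∫_0^1 e^{r√u z} z (1−z²)^{1/2} dz = e^{r√u} [√2 Γ(3/2) r^{−3/2} u^{−3/4} + O(u^{−5/4})]`
and
`∫_0^1 e^{r√u z} z (1−z²)^{3/2} dz = e^{r√u} [2^{3/2} Γ(5/2) r^{−5/2} u^{−5/4} + O(u^{−7/4})]`. -/
theorem watson_integral_asymptotics (r : ℝ) (hr : 0 < r) :
    ((fun u : ℝ =>
        (∫ z in (0:ℝ)..1, Real.exp (r * Real.sqrt u * z) * z * (1 - z ^ 2) ^ ((1:ℝ)/2)) -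
          Real.exp (r * Real.sqrt u) *
            (Real.sqrt 2 * Real.Gamma (3/2) * r ^ (-(3:ℝ)/2) * u ^ (-(3:ℝ)/4)))
      =O[atTop] fun u : ℝ => Real.exp (r * Real.sqrt u) * u ^ (-(5:ℝ)/4)) ∧
    ((fun u : ℝ =>
        (∫ z in (0:ℝ)..1, Real.exp (r * Real.sqrt u * z) * z * (1 - z ^ 2) ^ ((3:ℝ)/2)) -
          Real.exp (r * Real.sqrt u) *
            ((2:ℝ) ^ ((3:ℝ)/2) * Real.Gamma (5/2) * r ^ (-(5:ℝ)/2) * u ^ (-(5:ℝ)/4)))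
      =O[atTop] fun u : ℝ => Real.exp (r * Real.sqrt u) * u ^ (-(7:ℝ)/4)) := by
  constructor
  · have h := conj_big_o r hr (1/2) (by norm_num)
    have e1 : ∀ u : ℝ, Real.sqrt 2 * Real.Gamma (3/2) * r ^ (-(3:ℝ)/2) * u ^ (-(3:ℝ)/4)
        = (2:ℝ) ^ ((1:ℝ)/2) * Real.Gamma ((1:ℝ)/2 + 1) * r ^ (-((1:ℝ)/2 + 1))
            * u ^ (-((1:ℝ)/2 + 1) / 2) := by
      intro u
      rw [Real.sqrt_eq_rpow]
      norm_num
    have e2 : ∀ u : ℝ, (u : ℝ) ^ (-(5:ℝ)/4) = u ^ (-((1:ℝ)/2 + 2) / 2) := by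
      intro u; norm_num
    simp only [e1, e2]
    exact h
  · have h := conj_big_o r hr (3/2) (by norm_num)
    have e1 : ∀ u : ℝ, (2:ℝ) ^ ((3:ℝ)/2) * Real.Gamma (5/2) * r ^ (-(5:ℝ)/2) * u ^ (-(5:ℝ)/4)
        = (2:ℝ) ^ ((3:ℝ)/2) * Real.Gamma ((3:ℝ)/2 + 1) * r ^ (-((3:ℝ)/2 + 1))
            * u ^ (-((3:ℝ)/2 + 1) / 2) := by
      intro u; norm_num
    have e2 : ∀ u : ℝ, (u : ℝ) ^ (-(7:ℝ)/4) = u ^ (-((3:ℝ)/2 + 2) / 2) := by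
      intro u; norm_num
    simp only [e1, e2]
    exact h
end
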